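/- arXiv:1604.02077 — 10 statements merged into one kernel-verified Lean document; each statement's English description precedes it below -/
import Mathlib

section
/- There exists η₀ > 0 such that for every η ∈ [0, η₀] the reduced energy E_η(a,b) := 30·v_bond(a) + 60·v_bond(b) + η·(60·v_nbd(2b·sin(3π/10)) + 120·v_nbd(√(a² + b² + ab))) is strictly convex as a function of (a,b) on I_bond × I_bond. -/
open Set

private lemma strong_aux {f : ℝ → ℝ} {l u m : ℝ} {O : Set ℝ} (hO : IsOpen O)
    (hsub : Set.Icc l u ⊆ O)
    (hf : ContDiffOn ℝ (⊤ : ℕ∞) f O) (hm : ∀ x ∈ Set.Icc l u, m ≤ deriv (deriv f) x) :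
    ∀ x ∈ Set.Icc l u, ∀ y ∈ Set.Icc l u, ∀ a b : ℝ, 0 ≤ a → 0 ≤ b → a + b = 1 →
      f (a*x + b*y) ≤ a * f x + b * f y - m/2 * (a*b*(x-y)^2) := by
  have hd1 : ContDiffOn ℝ (⊤ : ℕ∞) (deriv f) O := hf.deriv_of_isOpen hO (by simp)
  have hdiff : ∀ x ∈ O, DifferentiableAt ℝ f x := fun x hx =>
    (hf.differentiableOn (by simp)).differentiableAt (hO.mem_nhds hx)
  have hdiff1 : ∀ x ∈ O, DifferentiableAt ℝ (deriv f) x := fun x hx =>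
    (hd1.differentiableOn (by simp)).differentiableAt (hO.mem_nhds hx)
  set φ : ℝ → ℝ := fun x => f x - m/2 * x^2 with hφ
  have hq : ∀ x : ℝ, HasDerivAt (fun y : ℝ => m/2 * y^2) (m * x) x := by
    intro x
    have := ((hasDerivAt_pow 2 x).const_mul (m/2))
    simpa using this.congr_deriv (by ring)
  have hφd : ∀ x ∈ O, HasDerivAt φ (deriv f x - m * x) x := fun x hx =>
    ((hdiff x hx).hasDerivAt).sub (hq x)
  have hφderiv : ∀ x ∈ O, deriv φ x = deriv f x - m * x := fun x hx =>
    (hφd x hx).deriv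
  have hconv : ConvexOn ℝ (Set.Icc l u) φ := by
    apply convexOn_of_deriv2_nonneg (convex_Icc l u)
    · exact ((hf.continuousOn).mono hsub).sub
        ((continuous_const.mul (continuous_pow 2)).continuousOn)
    · intro x hx
      rw [interior_Icc] at hx
      exact ((hφd x (hsub (Ioo_subset_Icc_self hx))).differentiableAt).differentiableWithinAt
    · intro x hx
      rw [interior_Icc] at hx
      have hxO : x ∈ O := hsub (Ioo_subset_Icc_self hx)
      have heq : deriv φ =ᶠ[nhds x] fun y => deriv f y - m * y :=
        Filter.eventually_of_mem (hO.mem_nhds hxO) hφderiv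
      have : DifferentiableAt ℝ (fun y => deriv f y - m * y) x :=
        (hdiff1 x hxO).sub (differentiableAt_id.const_mul m)
      exact (this.congr_of_eventuallyEq heq).differentiableWithinAt
    · intro x hx
      rw [interior_Icc] at hx
      have hxO : x ∈ O := hsub (Ioo_subset_Icc_self hx)
      have heq : deriv φ =ᶠ[nhds x] fun y => deriv f y - m * y :=
        Filter.eventually_of_mem (hO.mem_nhds hxO) hφderiv
      have h2 : deriv (deriv φ) x = deriv (deriv f) x - m := by
        rw [heq.deriv_eq]
        have hd : HasDerivAt (fun y => deriv f y - m * y) (deriv (deriv f) x - m) x := by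
          have := ((hdiff1 x hxO).hasDerivAt).sub ((hasDerivAt_id x).const_mul m)
          exact this.congr_deriv (by ring)
        exact hd.deriv
      have : deriv^[2] φ x = deriv (deriv φ) x := by
        simp [Function.iterate_succ, Function.comp]
      rw [this, h2]
      have := hm x (Ioo_subset_Icc_self hx)
      linarith
  intro x hx y hy a b ha hb hab
  have := hconv.2 hx hy ha hb hab
  simp only [smul_eq_mul, hφ] at this
  have hb' : b = 1 - a := by linarith
  subst hb'
  have hid : a*x^2 + (1-a)*y^2 - (a*x+(1-a)*y)^2 = a*(1-a)*(x-y)^2 := by ring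
  nlinarith [this, hid]

private lemma descent_aux {G : ℝ×ℝ → ℝ} {U D : Set (ℝ×ℝ)} {K : ℝ} (hK : 0 ≤ K)
    (hDU : D ⊆ U) (hD : Convex ℝ D)
    (hG : ∀ p ∈ U, HasFDerivAt G (fderiv ℝ G p) p)
    (hLip : ∀ p ∈ D, ∀ q ∈ D, ‖fderiv ℝ G p - fderiv ℝ G q‖ ≤ K * ‖p - q‖) :
    ∀ x ∈ D, ∀ y ∈ D, ∀ a b : ℝ, 0 ≤ a → 0 ≤ b → a + b = 1 →
      |a * G x + b * G y - G (a • x + b • y)| ≤ K * (a*b) * ‖x - y‖^2 := by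
  have key : ∀ z ∈ D, ∀ w ∈ D, |G w - G z - fderiv ℝ G z (w - z)| ≤ K * ‖w - z‖^2 := by
    intro z hz w hw
    set L := fderiv ℝ G z with hL
    set g : ℝ → ℝ := fun t => G (z + t • (w - z)) - t * (L (w - z)) with hg
    have hmem : ∀ t ∈ Set.Icc (0:ℝ) 1, z + t • (w - z) ∈ D := fun t ht =>
      hD.add_smul_sub_mem hz hw ht
    have hder : ∀ t ∈ Set.Icc (0:ℝ) 1,
        HasDerivWithinAt g (fderiv ℝ G (z + t • (w - z)) (w - z) - L (w - z)) (Set.Icc 0 1) t := by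
      intro t ht
      have hc : HasDerivAt (fun s : ℝ => z + s • (w - z)) (w - z) t := by
        have := ((hasDerivAt_id t).smul_const (w - z)).const_add z
        simpa using this
      have h1 : HasDerivAt (fun s : ℝ => G (z + s • (w - z)))
          (fderiv ℝ G (z + t • (w - z)) (w - z)) t :=
        (hG _ (hDU (hmem t ht))).comp_hasDerivAt t hc
      have h2 : HasDerivAt (fun s : ℝ => s * (L (w - z))) (L (w - z)) t :=
        hasDerivAt_mul_const _
      exact (h1.sub h2).hasDerivWithinAt
    have hbound : ∀ t ∈ Set.Icc (0:ℝ) 1,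
        ‖fderiv ℝ G (z + t • (w - z)) (w - z) - L (w - z)‖ ≤ K * ‖w - z‖^2 := by
      intro t ht
      have h1 : fderiv ℝ G (z + t • (w - z)) (w - z) - L (w - z)
          = (fderiv ℝ G (z + t • (w - z)) - L) (w - z) := by simp
      rw [h1]
      calc ‖(fderiv ℝ G (z + t • (w - z)) - L) (w - z)‖
          ≤ ‖fderiv ℝ G (z + t • (w - z)) - L‖ * ‖w - z‖ :=
            ContinuousLinearMap.le_opNorm _ _
        _ ≤ (K * ‖z + t • (w - z) - z‖) * ‖w - z‖ := by
            apply mul_le_mul_of_nonneg_right _ (norm_nonneg _)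
            exact hLip _ (hmem t ht) _ hz
        _ ≤ K * ‖w - z‖^2 := by
            have h3 : ‖z + t • (w - z) - z‖ = |t| * ‖w - z‖ := by
              simp [norm_smul]
            rw [h3, abs_of_nonneg ht.1]
            have h4 : t * ‖w - z‖ ≤ ‖w - z‖ := by
              nlinarith [norm_nonneg (w - z), ht.2]
            nlinarith [mul_le_mul_of_nonneg_left h4 hK, norm_nonneg (w - z)]
    have h10 : G w - G z - L (w - z) = g 1 - g 0 := by
      simp [hg]
      ring
    calc |G w - G z - L (w - z)| = ‖g 1 - g 0‖ := by rw [h10, Real.norm_eq_abs]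
      _ ≤ (K * ‖w - z‖^2) * ‖(1:ℝ) - 0‖ :=
          Convex.norm_image_sub_le_of_norm_hasDerivWithin_le hder hbound
            (convex_Icc 0 1) (Set.left_mem_Icc.2 zero_le_one) (Set.right_mem_Icc.2 zero_le_one)
      _ = K * ‖w - z‖^2 := by norm_num
  intro x hx y hy a b ha hb hab
  set z := a • x + b • y with hzdef
  have hzD : z ∈ D := hD hx hy ha hb hab
  have hxz : x - z = b • (x - y) := by
    rw [hzdef, show b = 1 - a by linarith]; module
  have hyz : y - z = -(a • (x - y)) := by
    rw [hzdef, show b = 1 - a by linarith]; module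
  have e1 := key z hzD x hx
  have e2 := key z hzD y hy
  set L := fderiv ℝ G z with hL
  rw [hxz] at e1
  rw [hyz] at e2
  rw [norm_smul] at e1
  rw [norm_neg, norm_smul] at e2
  simp only [map_smul, map_neg, smul_eq_mul, Real.norm_eq_abs, abs_of_nonneg ha,
    abs_of_nonneg hb] at e1 e2
  have hsplit : a * G x + b * G y - G z
      = a * (G x - G z - b * L (x - y)) + b * (G y - G z - -(a * L (x - y))) := by
    rw [show b = 1 - a by linarith]; ring
  calc |a * G x + b * G y - G z|
      = |a * (G x - G z - b * L (x - y)) + b * (G y - G z - -(a * L (x - y)))| := by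
        rw [hsplit]
    _ ≤ |a * (G x - G z - b * L (x - y))| + |b * (G y - G z - -(a * L (x - y)))| :=
        abs_add_le _ _
    _ = a * |G x - G z - b * L (x - y)| + b * |G y - G z - -(a * L (x - y))| := by
        rw [abs_mul, abs_mul, abs_of_nonneg ha, abs_of_nonneg hb]
    _ ≤ a * (K * (b * ‖x - y‖)^2) + b * (K * (a * ‖x - y‖)^2) := by
        apply add_le_add
        · exact mul_le_mul_of_nonneg_left e1 ha
        · exact mul_le_mul_of_nonneg_left e2 hb
    _ = K * (a*b) * ‖x - y‖^2 := by
        rw [show b = 1 - a by linarith]; ring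

private lemma prod_norm_sq_le (p : ℝ × ℝ) : ‖p‖^2 ≤ p.1^2 + p.2^2 := by
  have hpn : ‖p‖ = max |p.1| |p.2| := by rw [Prod.norm_def]; rfl
  rw [hpn]
  rcases max_cases |p.1| |p.2| with ⟨hm1, _⟩ | ⟨hm1, _⟩ <;> rw [hm1] <;>
    nlinarith [sq_abs p.1, sq_abs p.2, sq_nonneg p.1, sq_nonneg p.2]

private lemma prod_sq_pos {x y : ℝ × ℝ} (h : x ≠ y) :
    0 < (x.1 - y.1)^2 + (x.2 - y.2)^2 := by
  have hne : x.1 ≠ y.1 ∨ x.2 ≠ y.2 := by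
    by_contra hc
    push_neg at hc
    exact h (Prod.ext hc.1 hc.2)
  rcases hne with h' | h'
  · have h'' : x.1 - y.1 ≠ 0 := sub_ne_zero.2 h'
    nlinarith [sq_nonneg (x.2 - y.2), abs_pos.2 h'', sq_abs (x.1 - y.1)]
  · have h'' : x.2 - y.2 ≠ 0 := sub_ne_zero.2 h'
    nlinarith [sq_nonneg (x.1 - y.1), abs_pos.2 h'', sq_abs (x.2 - y.2)]

/-- The reduced configurational energy `E_η(a,b)` of the icosahedral configuration
`X_{a,b}` of the fullerene C₆₀. -/
noncomputable def Ered (vbond vnbd : ℝ → ℝ) (η : ℝ) (p : ℝ × ℝ) : ℝ :=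
  30 * vbond p.1 + 60 * vbond p.2 +
    η * (60 * vnbd (2 * p.2 * Real.sin (3 * Real.pi / 10)) +
         120 * vnbd (Real.sqrt (p.1 ^ 2 + p.2 ^ 2 + p.1 * p.2)))

set_option maxHeartbeats 2000000 in
/-- for all sufficiently small `η ≥ 0` the reduced energy `E_η` is strictly
convex on `I_bond × I_bond`, where `I_bond = Ioo l u` is a small open interval around `1`. -/
theorem stmt0
    (vbond vnbd : ℝ → ℝ) (l u n1 n2 : ℝ)
    (hl0 : 0 < l) (hl1 : l < 1) (hu1 : 1 < u)
    -- `v_bond` is smooth on the closure of `I_bond` (i.e. on an open set containing it)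
    (O : Set ℝ) (hO : IsOpen O) (hIccO : Set.Icc l u ⊆ O)
    (hvb_smooth : ContDiffOn ℝ (⊤ : ℕ∞) vbond O)
    -- `v_bond : [0,∞) → [-1,∞)` attains its minimum value `-1` exactly at `1`
    (hvb_lb : ∀ x : ℝ, 0 ≤ x → -1 ≤ vbond x)
    (hvb_min : ∀ x : ℝ, 0 ≤ x → (vbond x = -1 ↔ x = 1))
    -- `v_bond'' > 0` on the closure of `I_bond`
    (hvb_conv : ∀ x ∈ Set.Icc l u, 0 < deriv (deriv vbond) x)
    -- `I_nbd = Ioo n1 n2` is a small open neighborhood of `[2 sin(3π/10), √3]`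
    (hn1 : n1 < 2 * Real.sin (3 * Real.pi / 10))
    (hn2 : Real.sqrt 3 < n2)
    (hvn_smooth : ContDiffOn ℝ (⊤ : ℕ∞) vnbd (Set.Ioo n1 n2))
    (hvn_mono : MonotoneOn vnbd (Set.Ioo n1 n2))
    -- the second-neighbor distances lie in `I_nbd` for all `a, b` in the closure of `I_bond`
    (hrange : ∀ a ∈ Set.Icc l u, ∀ b ∈ Set.Icc l u,
      2 * b * Real.sin (3 * Real.pi / 10) ∈ Set.Ioo n1 n2 ∧
      Real.sqrt (a ^ 2 + b ^ 2 + a * b) ∈ Set.Ioo n1 n2) :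
    ∃ η₀ > (0:ℝ), ∀ η ∈ Set.Icc (0:ℝ) η₀,
      StrictConvexOn ℝ (Set.Ioo l u ×ˢ Set.Ioo l u) (Ered vbond vnbd η) := by
  have hlu : l ≤ u := le_trans hl1.le hu1.le
  -- lower bound `m > 0` for the second derivative of `vbond` on `[l,u]`
  have hd2 : ContDiffOn ℝ (⊤ : ℕ∞) (deriv (deriv vbond)) O :=
    (hvb_smooth.deriv_of_isOpen (m := ((⊤ : ℕ∞) : WithTop ℕ∞)) hO (by exact_mod_cast le_top)).deriv_of_isOpen (m := ((⊤ : ℕ∞) : WithTop ℕ∞)) hO (by exact_mod_cast le_top)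
  obtain ⟨x₀, hx₀, hmin⟩ := isCompact_Icc.exists_isMinOn (Set.nonempty_Icc.2 hlu)
    ((hd2.continuousOn).mono hIccO)
  set m := deriv (deriv vbond) x₀ with hmdef
  have hm0 : 0 < m := hvb_conv x₀ hx₀
  have hm : ∀ x ∈ Set.Icc l u, m ≤ deriv (deriv vbond) x := fun x hx => hmin hx
  have hsc := strong_aux hO hIccO hvb_smooth hm
  -- the neighbor-interaction part `G`
  set G : ℝ×ℝ → ℝ := fun p => 60 * vnbd (2 * p.2 * Real.sin (3 * Real.pi / 10)) +
      120 * vnbd (Real.sqrt (p.1 ^ 2 + p.2 ^ 2 + p.1 * p.2)) with hGdef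
  have hc1 : Continuous (fun p : ℝ×ℝ => 2 * p.2 * Real.sin (3 * Real.pi / 10)) := by fun_prop
  have hcQ : Continuous (fun p : ℝ×ℝ => p.1 ^ 2 + p.2 ^ 2 + p.1 * p.2) := by fun_prop
  have hc2 : Continuous (fun p : ℝ×ℝ => Real.sqrt (p.1 ^ 2 + p.2 ^ 2 + p.1 * p.2)) :=
    Real.continuous_sqrt.comp hcQ
  set U : Set (ℝ×ℝ) :=
    ((fun p : ℝ×ℝ => 2 * p.2 * Real.sin (3 * Real.pi / 10)) ⁻¹' Set.Ioo n1 n2) ∩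
      ((fun p : ℝ×ℝ => Real.sqrt (p.1 ^ 2 + p.2 ^ 2 + p.1 * p.2)) ⁻¹' Set.Ioo n1 n2) ∩
      {p : ℝ×ℝ | 0 < p.1 ^ 2 + p.2 ^ 2 + p.1 * p.2} with hUdef
  have hU : IsOpen U :=
    (((isOpen_Ioo.preimage hc1).inter (isOpen_Ioo.preimage hc2)).inter
      (isOpen_lt continuous_const hcQ))
  set D : Set (ℝ×ℝ) := Set.Icc l u ×ˢ Set.Icc l u with hDdef
  have hDU : D ⊆ U := by
    rintro ⟨p1, p2⟩ ⟨hp1, hp2⟩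
    obtain ⟨h1, h2⟩ := hrange p1 hp1 p2 hp2
    refine ⟨⟨h1, h2⟩, ?_⟩
    show 0 < p1^2 + p2^2 + p1*p2
    nlinarith [hp1.1, hp2.1, hl0]
  have hDconv : Convex ℝ D := (convex_Icc l u).prod (convex_Icc l u)
  have hDcomp : IsCompact D := isCompact_Icc.prod isCompact_Icc
  -- smoothness of `G` on `U`
  have hGU : ContDiffOn ℝ (⊤ : ℕ∞) G U := by
    intro p hp
    obtain ⟨⟨hp1, hp2⟩, hp3⟩ := hp
    have ca : ContDiffAt ℝ (⊤ : ℕ∞) (fun p : ℝ×ℝ => 2 * p.2 * Real.sin (3 * Real.pi / 10)) p := by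
      apply ContDiff.contDiffAt; fun_prop
    have cQ : ContDiffAt ℝ (⊤ : ℕ∞) (fun p : ℝ×ℝ => p.1 ^ 2 + p.2 ^ 2 + p.1 * p.2) p := by
      apply ContDiff.contDiffAt; fun_prop
    have v1 : ContDiffAt ℝ (⊤ : ℕ∞) vnbd (2 * p.2 * Real.sin (3 * Real.pi / 10)) :=
      hvn_smooth.contDiffAt (isOpen_Ioo.mem_nhds hp1)
    have v2 : ContDiffAt ℝ (⊤ : ℕ∞) vnbd (Real.sqrt (p.1 ^ 2 + p.2 ^ 2 + p.1 * p.2)) :=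
      hvn_smooth.contDiffAt (isOpen_Ioo.mem_nhds hp2)
    have s2 : ContDiffAt ℝ (⊤ : ℕ∞) Real.sqrt (p.1 ^ 2 + p.2 ^ 2 + p.1 * p.2) :=
      Real.contDiffAt_sqrt (ne_of_gt hp3)
    have hG : ContDiffAt ℝ (⊤ : ℕ∞) G p := by
      apply ContDiffAt.add
      · exact contDiffAt_const.mul (v1.comp p ca)
      · have h := (v2.comp _ s2).comp p cQ
        exact contDiffAt_const.mul h
    exact hG.contDiffWithinAt
  -- derivative facts for `G`
  have hGd : ∀ p ∈ U, HasFDerivAt G (fderiv ℝ G p) p := fun p hp =>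
    (((hGU p hp).contDiffAt (hU.mem_nhds hp)).differentiableAt (by simp)).hasFDerivAt
  have hG1 : ContDiffOn ℝ (⊤ : ℕ∞) (fderiv ℝ G) U := hGU.fderiv_of_isOpen hU (by simp)
  have hG2 : ContDiffOn ℝ (⊤ : ℕ∞) (fderiv ℝ (fderiv ℝ G)) U := hG1.fderiv_of_isOpen hU (by simp)
  have hG2cont : ContinuousOn (fderiv ℝ (fderiv ℝ G)) D := (hG2.continuousOn).mono hDU
  obtain ⟨C, hC⟩ := hDcomp.exists_bound_of_continuousOn (f := fderiv ℝ (fderiv ℝ G)) (by exact hG2cont)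
  set K := max C 0 with hKdef
  have hK0 : 0 ≤ K := le_max_right _ _
  have hLip : ∀ p ∈ D, ∀ q ∈ D, ‖fderiv ℝ G p - fderiv ℝ G q‖ ≤ K * ‖p - q‖ := by
    intro p hp q hq
    exact Convex.norm_image_sub_le_of_norm_hasFDerivWithin_le
      (fun r hr => ((((hG1 r (hDU hr)).contDiffAt
          (hU.mem_nhds (hDU hr))).differentiableAt (by simp)).hasFDerivAt).hasFDerivWithinAt)
      (fun r hr => le_trans (hC r hr) (le_max_left _ _)) hDconv hq hp
  have hdesc := descent_aux hK0 hDU hDconv hGd hLip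
  have hE : ∀ (t : ℝ) (p : ℝ × ℝ), Ered vbond vnbd t p
      = 30 * vbond p.1 + 60 * vbond p.2 + t * G p := fun t p => rfl
  clear_value m G U K
  refine ⟨m / (K + 1), by positivity, ?_⟩
  rintro η ⟨hη0, hη1⟩
  have hηK : η * K < 15 * m := by
    have h1 : η * K ≤ (m / (K+1)) * K := mul_le_mul_of_nonneg_right hη1 hK0
    have h2 : (m / (K+1)) * K < m := by
      rw [div_mul_eq_mul_div, div_lt_iff₀ (by linarith)]
      nlinarith
    linarith
  constructor
  · exact (convex_Ioo l u).prod (convex_Ioo l u)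
  intro x hx y hy hxy a b ha hb hab
  have hxD : x ∈ D := ⟨Ioo_subset_Icc_self hx.1, Ioo_subset_Icc_self hx.2⟩
  have hyD : y ∈ D := ⟨Ioo_subset_Icc_self hy.1, Ioo_subset_Icc_self hy.2⟩
  have h1 := hsc x.1 hxD.1 y.1 hyD.1 a b ha.le hb.le hab
  have h2 := hsc x.2 hxD.2 y.2 hyD.2 a b ha.le hb.le hab
  have h3 := hdesc x hxD y hyD a b ha.le hb.le hab
  have hz1 : (a • x + b • y).1 = a * x.1 + b * y.1 := rfl
  have hz2 : (a • x + b • y).2 = a * x.2 + b * y.2 := rfl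
  have hnorm : ‖x - y‖^2 ≤ (x.1 - y.1)^2 + (x.2 - y.2)^2 := prod_norm_sq_le (x - y)
  have hpos : 0 < (x.1 - y.1)^2 + (x.2 - y.2)^2 := prod_sq_pos hxy
  -- the key quantitative comparison
  have habp : 0 < a * b := mul_pos ha hb
  have hmain : η*K*(a*b)*‖x - y‖^2
      < 15*m*(a*b)*(x.1 - y.1)^2 + 30*m*(a*b)*(x.2 - y.2)^2 := by
    set S := (x.1 - y.1)^2 + (x.2 - y.2)^2 with hS
    have e1 : η*K*(a*b)*‖x - y‖^2 ≤ η*K*(a*b)*S :=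
      mul_le_mul_of_nonneg_left hnorm (by positivity)
    have e2 : η*K*(a*b)*S < 15*m*(a*b)*S := by
      have := mul_pos (sub_pos.2 hηK) (mul_pos habp hpos)
      nlinarith [this]
    have e3 : 15*m*(a*b)*S ≤ 15*m*(a*b)*(x.1 - y.1)^2 + 30*m*(a*b)*(x.2 - y.2)^2 := by
      have : 0 ≤ 15*m*(a*b)*(x.2 - y.2)^2 := by positivity
      rw [hS]
      nlinarith [this]
    linarith
  have h3' : G (a • x + b • y) ≤ a * G x + b * G y + K*(a*b)*‖x - y‖^2 := by
    have := (abs_le.1 h3).1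
    linarith
  have h5 : η * G (a • x + b • y) ≤ η * (a * G x + b * G y + K*(a*b)*‖x - y‖^2) :=
    mul_le_mul_of_nonneg_left h3' hη0
  rw [smul_eq_mul, smul_eq_mul, hE, hE, hE]
  rw [hz1, hz2]
  linarith [h1, h2, h5, hmain]
end

section
/- For every sufficiently small η ≥ 0 there exists a unique minimizer (a*_η, b*_η) of the reduced energy E_η over the closed square cl(I_bond) × cl(I_bond); this minimizer lies in the open square I_bond × I_bond, and (a*_η, b*_η) → (1,1) as η → 0⁺. -/
open Set Filter

set_option maxHeartbeats 8000000 in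
/-- for all sufficiently small `η ≥ 0` there is a unique minimizer
`(a*_η, b*_η)` of `E_η` over `cl(I_bond) × cl(I_bond)`; it lies in the open square
`I_bond × I_bond` and converges to `(1,1)` as `η → 0⁺`. -/
theorem stmt1
    (vbond vnbd : ℝ → ℝ) (l u n1 n2 : ℝ)
    (hl0 : 0 < l) (hl1 : l < 1) (hu1 : 1 < u)
    (O : Set ℝ) (hO : IsOpen O) (hIccO : Set.Icc l u ⊆ O)
    (hvb_smooth : ContDiffOn ℝ (⊤ : ℕ∞) vbond O)
    (hvb_lb : ∀ x : ℝ, 0 ≤ x → -1 ≤ vbond x)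
    (hvb_min : ∀ x : ℝ, 0 ≤ x → (vbond x = -1 ↔ x = 1))
    (hvb_conv : ∀ x ∈ Set.Icc l u, 0 < deriv (deriv vbond) x)
    (hn1 : n1 < 2 * Real.sin (3 * Real.pi / 10))
    (hn2 : Real.sqrt 3 < n2)
    (hvn_smooth : ContDiffOn ℝ (⊤ : ℕ∞) vnbd (Set.Ioo n1 n2))
    (hvn_mono : MonotoneOn vnbd (Set.Ioo n1 n2))
    (hrange : ∀ a ∈ Set.Icc l u, ∀ b ∈ Set.Icc l u,
      2 * b * Real.sin (3 * Real.pi / 10) ∈ Set.Ioo n1 n2 ∧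
      Real.sqrt (a ^ 2 + b ^ 2 + a * b) ∈ Set.Ioo n1 n2) :
    ∃ η₀ > (0:ℝ), ∃ m : ℝ → ℝ × ℝ,
      (∀ η ∈ Set.Icc (0:ℝ) η₀,
        -- the minimizer lies in the open square `I_bond × I_bond`
        m η ∈ Set.Ioo l u ×ˢ Set.Ioo l u ∧
        -- it minimizes `E_η` over the closed square
        IsMinOn (Ered vbond vnbd η) (Set.Icc l u ×ˢ Set.Icc l u) (m η) ∧
        -- it is the unique such minimizer
        (∀ p ∈ Set.Icc l u ×ˢ Set.Icc l u,
          IsMinOn (Ered vbond vnbd η) (Set.Icc l u ×ˢ Set.Icc l u) p → p = m η)) ∧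
      -- `(a*_η, b*_η) → (1,1)` as `η → 0⁺`
      Filter.Tendsto m (nhdsWithin 0 (Set.Ioi 0)) (nhds (1, 1)) := by
  classical
  have hlu : l ≤ u := le_trans hl1.le hu1.le
  set s : ℝ := Real.sin (3 * Real.pi / 10) with hs_def
  set Q : ℝ × ℝ → ℝ := fun p => p.1 ^ 2 + p.2 ^ 2 + p.1 * p.2 with hQ_def
  set F : ℝ × ℝ → ℝ := fun p => 30 * vbond p.1 + 60 * vbond p.2 with hF_def
  set G : ℝ × ℝ → ℝ :=
    fun p => 60 * vnbd (2 * p.2 * s) + 120 * vnbd (Real.sqrt (Q p)) with hG_def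
  have hEred : ∀ η p, Ered vbond vnbd η p = F p + η * G p := fun η p => rfl
  set sq : Set (ℝ × ℝ) := Set.Icc l u ×ˢ Set.Icc l u with hsq_def
  have hsq_cpt : IsCompact sq := isCompact_Icc.prod isCompact_Icc
  have hsq_conv : Convex ℝ sq := (convex_Icc l u).prod (convex_Icc l u)
  have hone : ((1:ℝ), (1:ℝ)) ∈ sq := ⟨⟨hl1.le, hu1.le⟩, ⟨hl1.le, hu1.le⟩⟩
  have hsq_ne : sq.Nonempty := ⟨_, hone⟩
  -- the open neighborhood U of sq on which everything is smooth
  set U : Set (ℝ × ℝ) :=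
    ((fun p : ℝ × ℝ => p.1) ⁻¹' O) ∩ ((fun p : ℝ × ℝ => p.2) ⁻¹' O) ∩
      ((fun p : ℝ × ℝ => p.1) ⁻¹' Set.Ioi 0) ∩ ((fun p : ℝ × ℝ => p.2) ⁻¹' Set.Ioi 0) ∩
      ((fun p : ℝ × ℝ => 2 * p.2 * s) ⁻¹' Set.Ioo n1 n2) ∩
      ((fun p : ℝ × ℝ => Real.sqrt (Q p)) ⁻¹' Set.Ioo n1 n2) with hU_def
  have hUopen : IsOpen U := by
    refine (((((hO.preimage continuous_fst).inter (hO.preimage continuous_snd)).inter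
      (isOpen_Ioi.preimage continuous_fst)).inter
      (isOpen_Ioi.preimage continuous_snd)).inter
      (isOpen_Ioo.preimage (by fun_prop))).inter
      (isOpen_Ioo.preimage ?_)
    exact Real.continuous_sqrt.comp (by fun_prop)
  have hsqU : sq ⊆ U := by
    rintro p ⟨hp1, hp2⟩
    obtain ⟨hr1, hr2⟩ := hrange p.1 hp1 p.2 hp2
    exact ⟨⟨⟨⟨⟨hIccO hp1, hIccO hp2⟩, lt_of_lt_of_le hl0 hp1.1⟩,
      lt_of_lt_of_le hl0 hp2.1⟩, hr1⟩, hr2⟩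
  have hQpos : ∀ p ∈ U, 0 < Q p := by
    rintro p ⟨⟨⟨⟨⟨-, -⟩, h3⟩, h4⟩, -⟩, -⟩
    have h3 : (0:ℝ) < p.1 := h3
    have h4 : (0:ℝ) < p.2 := h4
    simp only [hQ_def]
    linarith only [mul_pos h3 h4, sq_nonneg p.1, sq_nonneg p.2]
  -- smoothness of G on U
  have hQcd : ContDiff ℝ 2 Q := by
    simp only [hQ_def]; fun_prop
  have hvn2 : ContDiffOn ℝ 2 vnbd (Set.Ioo n1 n2) := hvn_smooth.of_le (WithTop.coe_le_coe.mpr le_top)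
  have hG1 : ContDiffOn ℝ 2 (fun p : ℝ × ℝ => vnbd (2 * p.2 * s)) U := by
    refine hvn2.comp ((by fun_prop : ContDiff ℝ 2 fun p : ℝ × ℝ => 2 * p.2 * s).contDiffOn) ?_
    rintro p ⟨⟨-, h5⟩, -⟩
    exact h5
  have hsqrtQ : ContDiffOn ℝ 2 (fun p : ℝ × ℝ => Real.sqrt (Q p)) U := by
    intro p hp
    exact ((Real.contDiffAt_sqrt (hQpos p hp).ne').comp p hQcd.contDiffAt).contDiffWithinAt
  have hG2 : ContDiffOn ℝ 2 (fun p : ℝ × ℝ => vnbd (Real.sqrt (Q p))) U := by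
    refine hvn2.comp hsqrtQ ?_
    rintro p ⟨-, h6⟩
    exact h6
  have hGsm : ContDiffOn ℝ 2 G U :=
    (contDiffOn_const.mul hG1).add (contDiffOn_const.mul hG2)
  -- regularity of vbond
  have hvb2 : ContDiffOn ℝ 2 vbond O := hvb_smooth.of_le (WithTop.coe_le_coe.mpr le_top)
  have hvb_diff : DifferentiableOn ℝ vbond O := hvb2.differentiableOn (by norm_num)
  have hw1 : ContDiffOn ℝ 1 (deriv vbond) O := hvb2.deriv_of_isOpen hO (by norm_num)
  have hw_diff : DifferentiableOn ℝ (deriv vbond) O := hw1.differentiableOn one_ne_zero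
  have hw_cont : ContinuousOn (deriv vbond) O := hw1.continuousOn
  have hww_cont : ContinuousOn (deriv (deriv vbond)) O :=
    hw1.continuousOn_deriv_of_isOpen hO le_rfl
  -- the strong convexity constant c
  obtain ⟨x₀, hx₀, hx₀min⟩ :=
    isCompact_Icc.exists_isMinOn (Set.nonempty_Icc.mpr hlu) (hww_cont.mono hIccO)
  set c : ℝ := deriv (deriv vbond) x₀ with hc_def
  have hc : 0 < c := hvb_conv x₀ hx₀
  have hcmin : ∀ x ∈ Set.Icc l u, c ≤ deriv (deriv vbond) x := fun x hx =>
    isMinOn_iff.mp hx₀min x hx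
  -- strong monotonicity of deriv vbond on [l,u]
  have hmonoW : ∀ x ∈ Set.Icc l u, ∀ y ∈ Set.Icc l u, y ≤ x →
      c * (x - y) ≤ deriv vbond x - deriv vbond y := by
    intro x hx y hy hyx
    have hφ : MonotoneOn (fun z => deriv vbond z - c * z) (Set.Icc l u) := by
      refine monotoneOn_of_deriv_nonneg (convex_Icc l u)
        (((hw_cont.mono hIccO).sub (continuous_const.mul continuous_id).continuousOn)) ?_ ?_
      · rw [interior_Icc]
        exact ((hw_diff.mono (fun z hz => hIccO (Set.Ioo_subset_Icc_self hz))).sub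
          ((differentiable_id.const_mul c).differentiableOn))
      · intro z hz
        rw [interior_Icc] at hz
        have hzO : z ∈ O := hIccO (Set.Ioo_subset_Icc_self hz)
        have hdz : DifferentiableAt ℝ (deriv vbond) z :=
          (hw_diff z hzO).differentiableAt (hO.mem_nhds hzO)
        have : deriv (fun z => deriv vbond z - c * z) z = deriv (deriv vbond) z - c := by
          have h1 : HasDerivAt (fun z => deriv vbond z - c * z)
              (deriv (deriv vbond) z - c * 1) z :=
            hdz.hasDerivAt.sub ((hasDerivAt_id z).const_mul c)
          simpa using h1.deriv
        rw [this]
        have := hcmin z (Set.Ioo_subset_Icc_self hz)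
        linarith
    have := hφ hy hx hyx
    simp only at this
    linarith only [this]
  have hmono2 : ∀ x ∈ Set.Icc l u, ∀ y ∈ Set.Icc l u,
      c * (x - y) ^ 2 ≤ (deriv vbond x - deriv vbond y) * (x - y) := by
    intro x hx y hy
    rcases le_total y x with h | h
    · have h2 := mul_le_mul_of_nonneg_right (hmonoW x hx y hy h) (sub_nonneg.mpr h)
      linarith only [h2]
    · have h2 := mul_le_mul_of_nonneg_right (hmonoW y hy x hx h) (sub_nonneg.mpr h)
      linarith only [h2]
  -- derivative of F
  set Fd : ℝ × ℝ → (ℝ × ℝ →L[ℝ] ℝ) := fun p =>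
    (30 * deriv vbond p.1) • (ContinuousLinearMap.fst ℝ ℝ ℝ) +
      (60 * deriv vbond p.2) • (ContinuousLinearMap.snd ℝ ℝ ℝ) with hFd_def
  have hFdApply : ∀ p v, Fd p v = 30 * deriv vbond p.1 * v.1 + 60 * deriv vbond p.2 * v.2 := by
    intro p v
    simp [hFd_def]
  have hFd : ∀ p : ℝ × ℝ, p.1 ∈ O → p.2 ∈ O → HasFDerivAt F (Fd p) p := by
    intro p h1 h2
    have d1 : HasDerivAt vbond (deriv vbond p.1) p.1 :=
      ((hvb_diff p.1 h1).differentiableAt (hO.mem_nhds h1)).hasDerivAt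
    have d2 : HasDerivAt vbond (deriv vbond p.2) p.2 :=
      ((hvb_diff p.2 h2).differentiableAt (hO.mem_nhds h2)).hasDerivAt
    have e1 : HasFDerivAt (fun q : ℝ × ℝ => vbond q.1)
        ((deriv vbond p.1) • ContinuousLinearMap.fst ℝ ℝ ℝ) p :=
      d1.comp_hasFDerivAt p hasFDerivAt_fst
    have e2 : HasFDerivAt (fun q : ℝ × ℝ => vbond q.2)
        ((deriv vbond p.2) • ContinuousLinearMap.snd ℝ ℝ ℝ) p :=
      d2.comp_hasFDerivAt p hasFDerivAt_snd
    have := (e1.const_mul (30:ℝ)).add (e2.const_mul (60:ℝ))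
    have heq : (30:ℝ) • ((deriv vbond p.1) • ContinuousLinearMap.fst ℝ ℝ ℝ) +
        (60:ℝ) • ((deriv vbond p.2) • ContinuousLinearMap.snd ℝ ℝ ℝ) = Fd p := by
      rw [hFd_def]; simp [smul_smul]
    rw [heq] at this
    exact this
  -- derivative of G
  set Gd : ℝ × ℝ → (ℝ × ℝ →L[ℝ] ℝ) := fun p => fderiv ℝ G p with hGd_def
  have hGdiffAt : ∀ p ∈ U, HasFDerivAt G (Gd p) p := fun p hp =>
    (((hGsm.contDiffAt (hUopen.mem_nhds hp)).differentiableAt (by norm_num))).hasFDerivAt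
  -- derivative of the energy
  have hE : ∀ η : ℝ, ∀ p ∈ U, HasFDerivAt (Ered vbond vnbd η) (Fd p + η • Gd p) p := by
    intro η p hp
    have h12 := hp.1.1.1.1
    exact (hFd p h12.1 h12.2).add ((hGdiffAt p hp).const_mul η)
  -- Lipschitz bound for Gd on sq
  have hGd_c1 : ContDiffOn ℝ 1 Gd U := hGsm.fderiv_of_isOpen hUopen (by norm_num)
  have hGd_diffAt : ∀ p ∈ sq, DifferentiableAt ℝ Gd p := fun p hp =>
    (hGd_c1.contDiffAt (hUopen.mem_nhds (hsqU hp))).differentiableAt one_ne_zero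
  have hGdd_cont : ContinuousOn (fderiv ℝ Gd) U :=
    hGd_c1.continuousOn_fderiv_of_isOpen hUopen le_rfl
  obtain ⟨L0, hL0⟩ := hsq_cpt.exists_bound_of_continuousOn (E := ℝ × ℝ →L[ℝ] ℝ × ℝ →L[ℝ] ℝ) (hGdd_cont.mono hsqU)
  set L : ℝ := max L0 0 with hL_def
  have hL0' : (0:ℝ) ≤ L := le_max_right _ _
  have hLip : ∀ p ∈ sq, ∀ q ∈ sq, ‖Gd p - Gd q‖ ≤ L * ‖p - q‖ := by
    intro p hp q hq
    exact hsq_conv.norm_image_sub_le_of_norm_fderiv_le hGd_diffAt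
      (fun x hx => le_trans (hL0 x hx) (le_max_left _ _)) hq hp
  -- continuity of F, G, E on sq
  have hvb_cont : ContinuousOn vbond O := hvb2.continuousOn
  have hFcont : ContinuousOn F sq := by
    refine (continuousOn_const.mul (hvb_cont.comp continuous_fst.continuousOn ?_)).add
      (continuousOn_const.mul (hvb_cont.comp continuous_snd.continuousOn ?_))
    · exact fun p hp => hIccO hp.1
    · exact fun p hp => hIccO hp.2
  have hGcont : ContinuousOn G sq := hGsm.continuousOn.mono hsqU
  have hEcont : ∀ η, ContinuousOn (Ered vbond vnbd η) sq := by
    intro η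
    exact hFcont.add (continuousOn_const.mul hGcont)
  -- existence of minimizers for every η
  have hex : ∀ η : ℝ, ∃ p ∈ sq, IsMinOn (Ered vbond vnbd η) sq p := fun η =>
    hsq_cpt.exists_isMinOn hsq_ne (hEcont η)
  set m : ℝ → ℝ × ℝ := fun η => (hex η).choose with hm_def
  have hm_mem : ∀ η, m η ∈ sq := fun η => (hex η).choose_spec.1
  have hm_min : ∀ η, IsMinOn (Ered vbond vnbd η) sq (m η) := fun η => (hex η).choose_spec.2
  -- basic facts about F
  have hvb1 : vbond 1 = -1 := (hvb_min 1 zero_le_one).mpr rfl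
  have hF11 : F ((1:ℝ), (1:ℝ)) = -90 := by simp [hF_def, hvb1]; ring
  have hF_lb : ∀ p ∈ sq, -90 ≤ F p := by
    rintro p ⟨hp1, hp2⟩
    have h1 := hvb_lb p.1 (le_trans hl0.le hp1.1)
    have h2 := hvb_lb p.2 (le_trans hl0.le hp2.1)
    simp only [hF_def]
    linarith
  have hF_eq : ∀ p ∈ sq, F p = -90 → p = ((1:ℝ), (1:ℝ)) := by
    rintro p ⟨hp1, hp2⟩ hFp
    have h1 := hvb_lb p.1 (le_trans hl0.le hp1.1)
    have h2 := hvb_lb p.2 (le_trans hl0.le hp2.1)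
    simp only [hF_def] at hFp
    have e1 : vbond p.1 = -1 := by linarith only [h1, h2, hFp]
    have e2 : vbond p.2 = -1 := by linarith only [h1, h2, hFp]
    have := (hvb_min p.1 (le_trans hl0.le hp1.1)).mp e1
    have := (hvb_min p.2 (le_trans hl0.le hp2.1)).mp e2
    exact Prod.ext (by assumption) (by assumption)
  -- bound on G on sq
  obtain ⟨B, hB⟩ := hsq_cpt.exists_bound_of_continuousOn hGcont
  have hB0 : (0:ℝ) ≤ B := le_trans (norm_nonneg _) (hB _ hone)
  -- localization of minimizers near (1,1)
  have hloc : ∀ δ > (0:ℝ), ∃ ν > (0:ℝ), ∀ η : ℝ, 0 ≤ η → η ≤ ν →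
      ∀ p ∈ sq, IsMinOn (Ered vbond vnbd η) sq p → dist p ((1:ℝ), (1:ℝ)) < δ := by
    intro δ hδ
    by_cases hSe : (sq \ Metric.ball ((1:ℝ), (1:ℝ)) δ).Nonempty
    · obtain ⟨z, hz, hzmin⟩ := (hsq_cpt.diff Metric.isOpen_ball).exists_isMinOn hSe
        (hFcont.mono Set.diff_subset)
      have hz90 : -90 < F z := by
        rcases lt_or_eq_of_le (hF_lb z hz.1) with h | h
        · exact h
        · exfalso
          have := hF_eq z hz.1 h.symm
          rw [this] at hz
          exact hz.2 (Metric.mem_ball_self hδ)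
      set ε : ℝ := F z + 90 with hε_def
      have hεpos : 0 < ε := by simp only [hε_def]; linarith
      refine ⟨ε / (2 * B + 1), by positivity, ?_⟩
      intro η hη0 hην p hp hpmin
      by_contra hcon
      have hpS : p ∈ sq \ Metric.ball ((1:ℝ), (1:ℝ)) δ := ⟨hp, fun h => hcon h⟩
      have hFzp : F z ≤ F p := isMinOn_iff.mp hzmin p hpS
      have hmin := isMinOn_iff.mp hpmin _ hone
      rw [hEred, hEred, hF11] at hmin
      have hGp : |G p| ≤ B := by
        have := hB p hp
        rwa [Real.norm_eq_abs] at this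
      have hG11 : |G ((1:ℝ), (1:ℝ))| ≤ B := by
        have := hB _ hone
        rwa [Real.norm_eq_abs] at this
      have h2B : η * (G ((1:ℝ), (1:ℝ)) - G p) ≤ η * (2 * B) := by
        apply mul_le_mul_of_nonneg_left _ hη0
        have := abs_le.mp hGp
        have := abs_le.mp hG11
        linarith
      have hηB : η * (2 * B) < ε := by
        have h1 : η * (2 * B) ≤ (ε / (2 * B + 1)) * (2 * B) :=
          mul_le_mul_of_nonneg_right hην (by linarith)
        have h2 : (ε / (2 * B + 1)) * (2 * B) < ε := by
          rw [div_mul_eq_mul_div, div_lt_iff₀ (by linarith)]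
          linarith only [hεpos]
        exact lt_of_le_of_lt h1 h2
      linarith
    · refine ⟨1, one_pos, fun η _ _ p hp hpmin => ?_⟩
      by_contra h
      exact hSe ⟨p, hp, fun hb => h hb⟩
  -- uniqueness of interior minimizers
  have huniq : ∀ η : ℝ, 0 ≤ η → η * L < 30 * c →
      ∀ p q : ℝ × ℝ, p ∈ sq → q ∈ sq →
      p ∈ Set.Ioo l u ×ˢ Set.Ioo l u → q ∈ Set.Ioo l u ×ˢ Set.Ioo l u →
      IsMinOn (Ered vbond vnbd η) sq p → IsMinOn (Ered vbond vnbd η) sq q → p = q := by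
    intro η hη0 hηL p q hpsq hqsq hpI hqI hpmin hqmin
    by_contra hne
    have hopen : IsOpen (Set.Ioo l u ×ˢ Set.Ioo l u) := isOpen_Ioo.prod isOpen_Ioo
    have hsub : Set.Ioo l u ×ˢ Set.Ioo l u ⊆ sq :=
      Set.prod_mono Set.Ioo_subset_Icc_self Set.Ioo_subset_Icc_self
    have hplm : IsLocalMin (Ered vbond vnbd η) p :=
      hpmin.isLocalMin (mem_nhds_iff.mpr ⟨_, hsub, hopen, hpI⟩)
    have hqlm : IsLocalMin (Ered vbond vnbd η) q :=
      hqmin.isLocalMin (mem_nhds_iff.mpr ⟨_, hsub, hopen, hqI⟩)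
    have hdp : Fd p + η • Gd p = 0 := hplm.hasFDerivAt_eq_zero (hE η p (hsqU hpsq))
    have hdq : Fd q + η • Gd q = 0 := hqlm.hasFDerivAt_eq_zero (hE η q (hsqU hqsq))
    set v : ℝ × ℝ := p - q with hv_def
    have hvne : v ≠ 0 := sub_ne_zero.mpr hne
    have hN : (0:ℝ) < ‖v‖ := norm_pos_iff.mpr hvne
    have hkey : (Fd p v + η * Gd p v) - (Fd q v + η * Gd q v) = 0 := by
      have h1 : (Fd p + η • Gd p) v = 0 := by rw [hdp]; rfl
      have h2 : (Fd q + η • Gd q) v = 0 := by rw [hdq]; rfl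
      simp only [ContinuousLinearMap.add_apply, ContinuousLinearMap.smul_apply,
        smul_eq_mul] at h1 h2
      linarith
    have hv1 : v.1 = p.1 - q.1 := rfl
    have hv2 : v.2 = p.2 - q.2 := rfl
    -- the bond part is strongly monotone
    have hA : 30 * c * (p.1 - q.1) ^ 2 + 60 * c * (p.2 - q.2) ^ 2 ≤
        Fd p v - Fd q v := by
      rw [hFdApply, hFdApply, hv1, hv2]
      have h1 := hmono2 p.1 hpsq.1 q.1 hqsq.1
      have h2 := hmono2 p.2 hpsq.2 q.2 hqsq.2
      linarith only [h1, h2]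
    -- the neighbor part is Lipschitz
    have hGdv : |Gd p v - Gd q v| ≤ L * ‖v‖ * ‖v‖ := by
      have h1 : Gd p v - Gd q v = (Gd p - Gd q) v := by
        simp [ContinuousLinearMap.sub_apply]
      rw [h1]
      calc |(Gd p - Gd q) v| = ‖(Gd p - Gd q) v‖ := (Real.norm_eq_abs _).symm
        _ ≤ ‖Gd p - Gd q‖ * ‖v‖ := ContinuousLinearMap.le_opNorm _ _
        _ ≤ (L * ‖p - q‖) * ‖v‖ :=
            mul_le_mul_of_nonneg_right (hLip p hpsq q hqsq) (norm_nonneg _)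
        _ = L * ‖v‖ * ‖v‖ := by rw [hv_def]
    -- norm comparison
    have hnorm : ‖v‖ ^ 2 ≤ (p.1 - q.1) ^ 2 + (p.2 - q.2) ^ 2 := by
      have h1 : ‖v‖ = max ‖v.1‖ ‖v.2‖ := Prod.norm_def v
      rcases max_choice ‖v.1‖ ‖v.2‖ with h | h
      · rw [h1, h, Real.norm_eq_abs, hv1, sq_abs]
        linarith only [sq_nonneg (p.2 - q.2)]
      · rw [h1, h, Real.norm_eq_abs, hv2, sq_abs]
        linarith only [sq_nonneg (p.1 - q.1)]
    -- put it together
    have hηGd : -(η * (L * ‖v‖ * ‖v‖)) ≤ η * (Gd p v - Gd q v) := by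
      have h1 : -(L * ‖v‖ * ‖v‖) ≤ Gd p v - Gd q v := (abs_le.mp hGdv).1
      have h2 := mul_le_mul_of_nonneg_left h1 hη0
      linarith only [h2]
    have hfinal : (0:ℝ) < (30 * c - η * L) * ‖v‖ ^ 2 :=
      mul_pos (by linarith) (by positivity)
    have hkey2 : (Fd p v - Fd q v) + η * (Gd p v - Gd q v) = 0 := by
      have hms := mul_sub η (Gd p v) (Gd q v)
      linarith only [hkey, hms]
    have hcy : (0:ℝ) ≤ 30 * c * (p.2 - q.2) ^ 2 := by positivity
    have hM := mul_le_mul_of_nonneg_left hnorm (by linarith : (0:ℝ) ≤ 30 * c)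
    have hexp : (30 * c - η * L) * ‖v‖ ^ 2 = 30 * c * ‖v‖ ^ 2 - η * (L * ‖v‖ * ‖v‖) := by
      ring
    linarith only [hA, hηGd, hkey2, hM, hcy, hfinal, hexp]
  -- choose η₀
  have hδ₀pos : (0:ℝ) < min (1 - l) (u - 1) := lt_min (by linarith) (by linarith)
  obtain ⟨ν₁, hν₁, hloc₁⟩ := hloc (min (1 - l) (u - 1)) hδ₀pos
  set η₀ : ℝ := min ν₁ (15 * c / (L + 1)) with hη₀_def
  have hη₀pos : 0 < η₀ := lt_min hν₁ (by positivity)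
  have hball_sub : ∀ p ∈ sq, dist p ((1:ℝ), (1:ℝ)) < min (1 - l) (u - 1) →
      p ∈ Set.Ioo l u ×ˢ Set.Ioo l u := by
    intro p hp hd
    rw [Prod.dist_eq] at hd
    have hd1 : dist p.1 1 < min (1 - l) (u - 1) := lt_of_le_of_lt (le_max_left _ _) hd
    have hd2 : dist p.2 1 < min (1 - l) (u - 1) := lt_of_le_of_lt (le_max_right _ _) hd
    rw [Real.dist_eq] at hd1 hd2
    have h1 := abs_lt.mp hd1
    have h2 := abs_lt.mp hd2
    have hm1 := min_le_left (1 - l) (u - 1)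
    have hm2 := min_le_right (1 - l) (u - 1)
    constructor
    · constructor <;> [linarith [h1.1]; linarith [h1.2]]
    · constructor <;> [linarith [h2.1]; linarith [h2.2]]
  have hηL : ∀ η : ℝ, η ≤ η₀ → η * L < 30 * c := by
    intro η hη
    have h1 : η ≤ 15 * c / (L + 1) := le_trans hη (min_le_right _ _)
    have h2 : η * L ≤ (15 * c / (L + 1)) * L := mul_le_mul_of_nonneg_right h1 hL0'
    have h3 : (15 * c / (L + 1)) * L < 30 * c := by
      rw [div_mul_eq_mul_div, div_lt_iff₀ (by linarith)]
      have hcL : (0:ℝ) ≤ c * L := mul_nonneg hc.le hL0'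
      linarith only [hc, hcL]
    linarith only [h2, h3]
  refine ⟨η₀, hη₀pos, m, ?_, ?_⟩
  · rintro η ⟨hη0, hηle⟩
    have hd := hloc₁ η hη0 (le_trans hηle (min_le_left _ _)) (m η) (hm_mem η) (hm_min η)
    have hmI := hball_sub _ (hm_mem η) hd
    refine ⟨hmI, hm_min η, ?_⟩
    intro p hp hpmin
    have hdp := hloc₁ η hη0 (le_trans hηle (min_le_left _ _)) p hp hpmin
    have hpI := hball_sub _ hp hdp
    exact huniq η hη0 (hηL η hηle) p (m η) hp (hm_mem η) hpI hmI hpmin (hm_min η)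
  · rw [Metric.tendsto_nhds]
    intro δ hδ
    obtain ⟨ν, hν, hν'⟩ := hloc δ hδ
    filter_upwards [Ioc_mem_nhdsGT_of_mem (Set.mem_Ico.mpr ⟨le_refl (0:ℝ), hν⟩)] with η hη
    exact hν' η hη.1.le hη.2 (m η) (hm_mem η) (hm_min η)
end

section
/- For every sufficiently small η ≥ 0, a point (a,b) ∈ I_bond × I_bond satisfies ∇E_η(a,b) = 0 if and only if (a,b) = (a*_η, b*_η), where (a*_η, b*_η) denotes the unique minimizer of E_η over cl(I_bond) × cl(I_bond). -/
open Set
open scoped ContDiff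


private lemma seg_aux (F : ℝ × ℝ → ℝ) (F1 : ℝ × ℝ → (ℝ × ℝ) →L[ℝ] ℝ)
    (F2 : ℝ × ℝ → (ℝ × ℝ) →L[ℝ] ((ℝ × ℝ) →L[ℝ] ℝ))
    (S : Set (ℝ × ℝ)) (hS : Convex ℝ S)
    (hF1 : ∀ x ∈ S, HasFDerivAt F (F1 x) x)
    (hF2 : ∀ x ∈ S, HasFDerivAt F1 (F2 x) x)
    (hpos : ∀ x ∈ S, ∀ w : ℝ × ℝ, w ≠ 0 → 0 < F2 x w w)
    (x : ℝ × ℝ) (hx : x ∈ S) (y : ℝ × ℝ) (hy : y ∈ S) (hxy : x ≠ y) :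
    (∀ t ∈ Set.Icc (0:ℝ) 1, x + t • (y - x) ∈ S) ∧
    (∀ t ∈ Set.Icc (0:ℝ) 1,
      HasDerivAt (fun t : ℝ => F (x + t • (y - x))) (F1 (x + t • (y - x)) (y - x)) t) ∧
    StrictMonoOn (fun t : ℝ => F1 (x + t • (y - x)) (y - x)) (Set.Icc (0:ℝ) 1) := by
  have hw : y - x ≠ 0 := sub_ne_zero.mpr (Ne.symm hxy)
  have hmem : ∀ t ∈ Set.Icc (0:ℝ) 1, x + t • (y - x) ∈ S := by
    intro t ht
    have h := hS hx hy (by linarith [ht.2] : (0:ℝ) ≤ 1 - t) ht.1 (by ring)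
    have e : x + t • (y - x) = (1 - t) • x + t • y := by module
    rw [e]; exact h
  have hγ : ∀ t : ℝ, HasDerivAt (fun t : ℝ => x + t • (y - x)) (y - x) t := by
    intro t
    simpa using ((hasDerivAt_id t).smul_const (y - x)).const_add x
  have hψ : ∀ t ∈ Set.Icc (0:ℝ) 1, HasDerivAt (fun t : ℝ => F (x + t • (y - x)))
      (F1 (x + t • (y - x)) (y - x)) t := fun t ht =>
    (hF1 _ (hmem t ht)).comp_hasDerivAt t (hγ t)
  have hφ : ∀ t ∈ Set.Icc (0:ℝ) 1, HasDerivAt (fun t : ℝ => F1 (x + t • (y - x)) (y - x))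
      (F2 (x + t • (y - x)) (y - x) (y - x)) t := by
    intro t ht
    have h1 : HasDerivAt (fun t : ℝ => F1 (x + t • (y - x))) (F2 (x + t • (y - x)) (y - x)) t :=
      (hF2 _ (hmem t ht)).comp_hasDerivAt t (hγ t)
    have h2 := (ContinuousLinearMap.apply ℝ ℝ (y - x)).hasFDerivAt.comp_hasDerivAt t h1
    exact h2
  refine ⟨hmem, hψ, ?_⟩
  refine strictMonoOn_of_deriv_pos (convex_Icc 0 1)
    (fun t ht => ((hφ t ht).continuousAt).continuousWithinAt) ?_
  intro t ht
  rw [interior_Icc] at ht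
  rw [(hφ t (Set.mem_Icc_of_Ioo ht)).deriv]
  exact hpos _ (hmem t (Set.mem_Icc_of_Ioo ht)) _ hw

private lemma seg_key (F : ℝ × ℝ → ℝ) (F1 : ℝ × ℝ → (ℝ × ℝ) →L[ℝ] ℝ)
    (F2 : ℝ × ℝ → (ℝ × ℝ) →L[ℝ] ((ℝ × ℝ) →L[ℝ] ℝ))
    (S : Set (ℝ × ℝ)) (hS : Convex ℝ S)
    (hF1 : ∀ x ∈ S, HasFDerivAt F (F1 x) x)
    (hF2 : ∀ x ∈ S, HasFDerivAt F1 (F2 x) x)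
    (hpos : ∀ x ∈ S, ∀ w : ℝ × ℝ, w ≠ 0 → 0 < F2 x w w) :
    (∀ p ∈ S, F1 p = 0 → IsMinOn F S p) ∧
      (∀ p ∈ S, ∀ q ∈ S, IsMinOn F S p → IsMinOn F S q → p = q) := by
  constructor
  · intro p hp h0
    rw [isMinOn_iff]
    intro y hy
    rcases eq_or_ne p y with rfl | hne
    · exact le_refl _
    obtain ⟨hmem, hψ, hmono⟩ := seg_aux F F1 F2 S hS hF1 hF2 hpos p hp y hy hne
    have h0m : (0:ℝ) ∈ Set.Icc (0:ℝ) 1 := Set.left_mem_Icc.mpr zero_le_one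
    have h1m : (1:ℝ) ∈ Set.Icc (0:ℝ) 1 := Set.right_mem_Icc.mpr zero_le_one
    have hψmono : StrictMonoOn (fun t : ℝ => F (p + t • (y - p))) (Set.Icc (0:ℝ) 1) := by
      refine strictMonoOn_of_deriv_pos (convex_Icc 0 1)
        (fun t ht => (hψ t ht).continuousAt.continuousWithinAt) ?_
      intro t ht
      rw [interior_Icc] at ht
      rw [(hψ t (Set.mem_Icc_of_Ioo ht)).deriv]
      have h := hmono h0m (Set.mem_Icc_of_Ioo ht) ht.1
      simpa [h0] using h
    have h := hψmono h0m h1m one_pos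
    have e1 : p + (1:ℝ) • (y - p) = y := by module
    have e0 : p + (0:ℝ) • (y - p) = p := by module
    simp only [e0, e1] at h
    exact h.le
  · intro p hp q hq hminp hminq
    by_contra hne
    obtain ⟨hmem, hψ, hmono⟩ := seg_aux F F1 F2 S hS hF1 hF2 hpos p hp q hq hne
    have h0m : (0:ℝ) ∈ Set.Icc (0:ℝ) 1 := Set.left_mem_Icc.mpr zero_le_one
    have h1m : (1:ℝ) ∈ Set.Icc (0:ℝ) 1 := Set.right_mem_Icc.mpr zero_le_one
    have hhalf : (1/2:ℝ) ∈ Set.Icc (0:ℝ) 1 := by norm_num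
    have e1 : p + (1:ℝ) • (q - p) = q := by module
    have e0 : p + (0:ℝ) • (q - p) = p := by module
    have hpq : F p = F q := le_antisymm (isMinOn_iff.mp hminp q hq) (isMinOn_iff.mp hminq p hp)
    have hmid : p + (1/2:ℝ) • (q - p) ∈ S := hmem _ hhalf
    rcases le_or_gt (F1 (p + (1/2:ℝ) • (q - p)) (q - p)) 0 with hc | hc
    · have hanti : StrictAntiOn (fun t : ℝ => F (p + t • (q - p))) (Set.Icc (0:ℝ) (1/2)) := by
        refine strictAntiOn_of_deriv_neg (convex_Icc 0 (1/2))
          (fun t ht => (hψ t (Set.Icc_subset_Icc_right (by norm_num) ht)).continuousAt.continuousWithinAt) ?_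
        intro t ht
        rw [interior_Icc] at ht
        have htI : t ∈ Set.Icc (0:ℝ) 1 := ⟨ht.1.le, by linarith [ht.2]⟩
        rw [(hψ t htI).deriv]
        have h := hmono htI hhalf ht.2
        linarith
      have h := hanti (Set.left_mem_Icc.mpr (by norm_num)) (Set.right_mem_Icc.mpr (by norm_num))
        (by norm_num)
      simp only [e0] at h
      have hle := isMinOn_iff.mp hminp _ hmid
      linarith
    · have hmono2 : StrictMonoOn (fun t : ℝ => F (p + t • (q - p))) (Set.Icc (1/2:ℝ) 1) := by
        refine strictMonoOn_of_deriv_pos (convex_Icc (1/2) 1)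
          (fun t ht => (hψ t (Set.Icc_subset_Icc_left (by norm_num) ht)).continuousAt.continuousWithinAt) ?_
        intro t ht
        rw [interior_Icc] at ht
        have htI : t ∈ Set.Icc (0:ℝ) 1 := ⟨by linarith [ht.1], ht.2.le⟩
        rw [(hψ t htI).deriv]
        have h := hmono hhalf htI ht.1
        linarith
      have h := hmono2 (Set.left_mem_Icc.mpr (by norm_num)) (Set.right_mem_Icc.mpr (by norm_num))
        (by norm_num)
      simp only [e1] at h
      have hle := isMinOn_iff.mp hminq _ hmid
      linarith




set_option maxHeartbeats 4000000 in
/-- for all sufficiently small `η ≥ 0`, a point `(a,b) ∈ I_bond × I_bond`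
is a critical point of `E_η` (i.e. `∇E_η(a,b) = 0`) if and only if it equals the unique
minimizer `(a*_η, b*_η)` of `E_η` over the closed square. -/
theorem stmt2
    (vbond vnbd : ℝ → ℝ) (l u n1 n2 : ℝ)
    (hl0 : 0 < l) (hl1 : l < 1) (hu1 : 1 < u)
    (O : Set ℝ) (hO : IsOpen O) (hIccO : Set.Icc l u ⊆ O)
    (hvb_smooth : ContDiffOn ℝ (⊤ : ℕ∞) vbond O)
    (hvb_lb : ∀ x : ℝ, 0 ≤ x → -1 ≤ vbond x)
    (hvb_min : ∀ x : ℝ, 0 ≤ x → (vbond x = -1 ↔ x = 1))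
    (hvb_conv : ∀ x ∈ Set.Icc l u, 0 < deriv (deriv vbond) x)
    (hn1 : n1 < 2 * Real.sin (3 * Real.pi / 10))
    (hn2 : Real.sqrt 3 < n2)
    (hvn_smooth : ContDiffOn ℝ (⊤ : ℕ∞) vnbd (Set.Ioo n1 n2))
    (hvn_mono : MonotoneOn vnbd (Set.Ioo n1 n2))
    (hrange : ∀ a ∈ Set.Icc l u, ∀ b ∈ Set.Icc l u,
      2 * b * Real.sin (3 * Real.pi / 10) ∈ Set.Ioo n1 n2 ∧
      Real.sqrt (a ^ 2 + b ^ 2 + a * b) ∈ Set.Ioo n1 n2) :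
    ∃ η₀ > (0:ℝ), ∀ η ∈ Set.Icc (0:ℝ) η₀,
      ∀ m ∈ Set.Icc l u ×ˢ Set.Icc l u,
        IsMinOn (Ered vbond vnbd η) (Set.Icc l u ×ˢ Set.Icc l u) m →
        ∀ p ∈ Set.Ioo l u ×ˢ Set.Ioo l u,
          (fderiv ℝ (Ered vbond vnbd η) p = 0 ↔ p = m) := by
  have hinf1 : (∞ : WithTop ℕ∞) + 1 ≤ ∞ := le_of_eq rfl
  have h1inf : (1 : WithTop ℕ∞) ≤ ∞ := by
    exact_mod_cast (le_top : (1:ℕ∞) ≤ ⊤)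
  -- the square
  set S : Set (ℝ × ℝ) := Set.Icc l u ×ˢ Set.Icc l u with hSdef
  have hSconv : Convex ℝ S := (convex_Icc l u).prod (convex_Icc l u)
  have hScomp : IsCompact S := isCompact_Icc.prod isCompact_Icc
  -- the open neighborhood U of S
  set U : Set (ℝ × ℝ) := (Prod.fst ⁻¹' (O ∩ Set.Ioi 0)) ∩ (Prod.snd ⁻¹' (O ∩ Set.Ioi 0)) ∩
      ((fun p : ℝ × ℝ => 2 * p.2 * Real.sin (3 * Real.pi / 10)) ⁻¹' Set.Ioo n1 n2) ∩
      ((fun p : ℝ × ℝ => Real.sqrt (p.1 ^ 2 + p.2 ^ 2 + p.1 * p.2)) ⁻¹' Set.Ioo n1 n2)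
    with hUdef
  have hUopen : IsOpen U := by
    refine IsOpen.inter (IsOpen.inter (IsOpen.inter ?_ ?_) ?_) ?_
    · exact (hO.inter isOpen_Ioi).preimage continuous_fst
    · exact (hO.inter isOpen_Ioi).preimage continuous_snd
    · exact isOpen_Ioo.preimage (by fun_prop)
    · exact isOpen_Ioo.preimage (Real.continuous_sqrt.comp (by fun_prop))
  have hSU : S ⊆ U := by
    rintro x ⟨hx1, hx2⟩
    refine ⟨⟨⟨?_, ?_⟩, ?_⟩, ?_⟩
    · exact ⟨hIccO hx1, lt_of_lt_of_le hl0 hx1.1⟩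
    · exact ⟨hIccO hx2, lt_of_lt_of_le hl0 hx2.1⟩
    · exact (hrange x.1 hx1 x.2 hx2).1
    · exact (hrange x.1 hx1 x.2 hx2).2
  -- vbond derivative facts
  set D1 : ℝ → ℝ := deriv vbond with hD1def
  set D2 : ℝ → ℝ := deriv D1 with hD2def
  have hvb : ContDiffOn ℝ ∞ vbond O := hvb_smooth.of_le (by simp)
  have hD1sm : ContDiffOn ℝ ∞ D1 O := hvb.deriv_of_isOpen hO hinf1
  have hD2sm : ContDiffOn ℝ ∞ D2 O := hD1sm.deriv_of_isOpen hO hinf1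
  have hvbd : ∀ y ∈ O, HasDerivAt vbond (D1 y) y := fun y hy =>
    ((hvb.differentiableOn (by simp)).differentiableAt (hO.mem_nhds hy)).hasDerivAt
  have hD1d : ∀ y ∈ O, HasDerivAt D1 (D2 y) y := fun y hy =>
    ((hD1sm.differentiableOn (by simp)).differentiableAt (hO.mem_nhds hy)).hasDerivAt
  -- the positive lower bound on D2 over [l, u]
  have hlu : l ≤ u := (hl1.trans hu1).le
  obtain ⟨x₀, hx₀mem, hx₀min⟩ := isCompact_Icc.exists_isMinOn (Set.nonempty_Icc.mpr hlu)
    (hD2sm.continuousOn.mono hIccO)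
  set c : ℝ := D2 x₀ with hcdef
  have hcpos : 0 < c := hvb_conv x₀ hx₀mem
  have hcle : ∀ z ∈ Set.Icc l u, c ≤ D2 z := fun z hz => isMinOn_iff.mp hx₀min z hz
  clear_value c
  clear hcdef hx₀min hx₀mem
  -- the perturbation G and its derivatives
  set G : ℝ × ℝ → ℝ := fun p => 60 * vnbd (2 * p.2 * Real.sin (3 * Real.pi / 10)) +
      120 * vnbd (Real.sqrt (p.1 ^ 2 + p.2 ^ 2 + p.1 * p.2)) with hGdef
  have hvn : ContDiffOn ℝ ∞ vnbd (Set.Ioo n1 n2) := hvn_smooth.of_le (by simp)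
  have hGsm : ContDiffOn ℝ ∞ G U := by
    have c1 : ContDiffOn ℝ ∞ (fun p : ℝ × ℝ => vnbd (2 * p.2 * Real.sin (3 * Real.pi / 10))) U := by
      refine hvn.comp ?_ ?_
      · exact (ContDiff.contDiffOn (by fun_prop))
      · intro p hp
        exact hp.1.2
    have c2 : ContDiffOn ℝ ∞ (fun p : ℝ × ℝ =>
        vnbd (Real.sqrt (p.1 ^ 2 + p.2 ^ 2 + p.1 * p.2))) U := by
      intro p hp
      have hposq : 0 < p.1 ^ 2 + p.2 ^ 2 + p.1 * p.2 := by
        have h1 : 0 < p.1 := hp.1.1.1.2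
        have h2 : 0 < p.2 := hp.1.1.2.2
        nlinarith
      have hq : ContDiffAt ℝ ∞ (fun p : ℝ × ℝ => p.1 ^ 2 + p.2 ^ 2 + p.1 * p.2) p := by
        fun_prop
      have hsq : ContDiffAt ℝ ∞ Real.sqrt (p.1 ^ 2 + p.2 ^ 2 + p.1 * p.2) :=
        Real.contDiffAt_sqrt (ne_of_gt hposq)
      have hvn' : ContDiffAt ℝ ∞ vnbd (Real.sqrt (p.1 ^ 2 + p.2 ^ 2 + p.1 * p.2)) :=
        hvn.contDiffAt (isOpen_Ioo.mem_nhds hp.2)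
      have hcomp : ContDiffAt ℝ ∞ (fun p : ℝ × ℝ =>
          Real.sqrt (p.1 ^ 2 + p.2 ^ 2 + p.1 * p.2)) p := hsq.comp p hq
      exact (hvn'.comp p hcomp).contDiffWithinAt
    have : ContDiffOn ℝ ∞ (fun p : ℝ × ℝ =>
        60 * vnbd (2 * p.2 * Real.sin (3 * Real.pi / 10)) +
        120 * vnbd (Real.sqrt (p.1 ^ 2 + p.2 ^ 2 + p.1 * p.2))) U :=
      (contDiffOn_const.mul c1).add (contDiffOn_const.mul c2)
    exact this
  set G1 : ℝ × ℝ → (ℝ × ℝ) →L[ℝ] ℝ := fderiv ℝ G with hG1def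
  set G2 : ℝ × ℝ → (ℝ × ℝ) →L[ℝ] ((ℝ × ℝ) →L[ℝ] ℝ) := fderiv ℝ G1 with hG2def
  have hGd : ∀ x ∈ U, HasFDerivAt G (G1 x) x := fun x hx =>
    ((hGsm.differentiableOn (by simp)).differentiableAt (hUopen.mem_nhds hx)).hasFDerivAt
  have hG1sm : ContDiffOn ℝ ∞ G1 U := hGsm.fderiv_of_isOpen hUopen hinf1
  have hG1d : ∀ x ∈ U, HasFDerivAt G1 (G2 x) x := fun x hx =>
    ((hG1sm.differentiableOn (by simp)).differentiableAt (hUopen.mem_nhds hx)).hasFDerivAt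
  have hG2cont : ContinuousOn G2 U := hG1sm.continuousOn_fderiv_of_isOpen hUopen h1inf
  clear_value G2
  clear hG2def hG1sm
  clear_value G1
  clear hG1def hGsm
  -- a bound on the second derivative of G on S
  have hSne : S.Nonempty := ⟨(l, l), ⟨⟨le_refl l, hlu⟩, ⟨le_refl l, hlu⟩⟩⟩
  have hnormcont : ContinuousOn (fun x : ℝ × ℝ => ‖G2 x‖) S :=
    ContinuousOn.norm (E := (ℝ × ℝ) →L[ℝ] ((ℝ × ℝ) →L[ℝ] ℝ)) (hG2cont.mono hSU)
  obtain ⟨z₀, hz₀S, hz₀max⟩ := hScomp.exists_isMaxOn hSne hnormcont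
  set M : ℝ := max ‖G2 z₀‖ 0 with hMdef
  have hM0 : 0 ≤ M := le_max_right _ _
  have hMb : ∀ x ∈ S, ‖G2 x‖ ≤ M := fun x hx =>
    (isMaxOn_iff.mp hz₀max x hx).trans (le_max_left _ _)
  clear_value M
  clear hMdef hz₀max hz₀S hnormcont
  -- choose η₀ and prove the statement
  set fstL : (ℝ × ℝ) →L[ℝ] ℝ := ContinuousLinearMap.fst ℝ ℝ ℝ with hfstL
  set sndL : (ℝ × ℝ) →L[ℝ] ℝ := ContinuousLinearMap.snd ℝ ℝ ℝ with hsndL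
  refine ⟨15 * c / (M + 1), by positivity, ?_⟩
  intro η hη m hm hmin p hp
  set F1 : ℝ × ℝ → (ℝ × ℝ) →L[ℝ] ℝ := fun x =>
    (30:ℝ) • (D1 x.1 • fstL) + (60:ℝ) • (D1 x.2 • sndL) + η • G1 x with hF1def
  set F2 : ℝ × ℝ → (ℝ × ℝ) →L[ℝ] ((ℝ × ℝ) →L[ℝ] ℝ) := fun x =>
    (30:ℝ) • ((D2 x.1 • fstL).smulRight fstL) + (60:ℝ) • ((D2 x.2 • sndL).smulRight sndL)
      + η • G2 x with hF2def
  have hxO : ∀ x : ℝ × ℝ, x ∈ U → x.1 ∈ O ∧ x.2 ∈ O := fun x hx => ⟨hx.1.1.1.1, hx.1.1.2.1⟩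
  have hA : ∀ x ∈ S, HasFDerivAt (Ered vbond vnbd η) (F1 x) x := by
    intro x hxS
    have hxU := hSU hxS
    have hb1 : HasFDerivAt (fun p : ℝ × ℝ => vbond p.1) (D1 x.1 • fstL) x :=
      (hvbd x.1 (hxO x hxU).1).comp_hasFDerivAt x hasFDerivAt_fst
    have hb2 : HasFDerivAt (fun p : ℝ × ℝ => vbond p.2) (D1 x.2 • sndL) x :=
      (hvbd x.2 (hxO x hxU).2).comp_hasFDerivAt x hasFDerivAt_snd
    have hH : HasFDerivAt (fun p : ℝ × ℝ => 30 * vbond p.1 + 60 * vbond p.2)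
        ((30:ℝ) • (D1 x.1 • fstL) + (60:ℝ) • (D1 x.2 • sndL)) x :=
      (hb1.const_mul 30).add (hb2.const_mul 60)
    have hGd' : HasFDerivAt (fun p : ℝ × ℝ => η * G p) (η • G1 x) x :=
      (hGd x hxU).const_mul η
    exact hH.add hGd'
  have hB : ∀ x ∈ S, HasFDerivAt F1 (F2 x) x := by
    intro x hxS
    have hxU := hSU hxS
    have hc1 : HasFDerivAt (fun x : ℝ × ℝ => D1 x.1) (D2 x.1 • fstL) x :=
      (hD1d x.1 (hxO x hxU).1).comp_hasFDerivAt x hasFDerivAt_fst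
    have hc2 : HasFDerivAt (fun x : ℝ × ℝ => D1 x.2) (D2 x.2 • sndL) x :=
      (hD1d x.2 (hxO x hxU).2).comp_hasFDerivAt x hasFDerivAt_snd
    have h30 : HasFDerivAt (fun x : ℝ × ℝ => (30:ℝ) • (D1 x.1 • fstL))
        ((30:ℝ) • ((D2 x.1 • fstL).smulRight fstL)) x :=
      (hc1.smul_const fstL).const_smul (30:ℝ)
    have h60 : HasFDerivAt (fun x : ℝ × ℝ => (60:ℝ) • (D1 x.2 • sndL))
        ((60:ℝ) • ((D2 x.2 • sndL).smulRight sndL)) x :=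
      (hc2.smul_const sndL).const_smul (60:ℝ)
    have hg : HasFDerivAt (fun x : ℝ × ℝ => η • G1 x) (η • G2 x) x :=
      (hG1d x hxU).const_smul η
    exact (h30.add h60).add hg
  have hC : ∀ x ∈ S, ∀ w : ℝ × ℝ, w ≠ 0 → 0 < F2 x w w := by
    intro x hxS w hw
    have hx1 : x.1 ∈ Set.Icc l u := hxS.1
    have hx2 : x.2 ∈ Set.Icc l u := hxS.2
    have hcc1 : c ≤ D2 x.1 := hcle _ hx1
    have hcc2 : c ≤ D2 x.2 := hcle _ hx2
    have hw' : w.1 ≠ 0 ∨ w.2 ≠ 0 := by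
      by_contra h; push_neg at h; exact hw (Prod.ext h.1 h.2)
    have hwpos : 0 < w.1 ^ 2 + w.2 ^ 2 := by
      rcases hw' with h | h
      · positivity
      · positivity
    have hn1' : ‖(G2 x) w w‖ ≤ ‖(G2 x) w‖ * ‖w‖ := ContinuousLinearMap.le_opNorm _ w
    have hn2' : ‖(G2 x) w‖ ≤ ‖G2 x‖ * ‖w‖ := ContinuousLinearMap.le_opNorm _ w
    have hn3 : ‖G2 x‖ ≤ M := hMb x hxS
    have hn4 : ‖w‖ * ‖w‖ ≤ w.1 ^ 2 + w.2 ^ 2 := by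
      rw [Prod.norm_def]
      rcases max_cases ‖w.1‖ ‖w.2‖ with ⟨he, _⟩ | ⟨he, _⟩ <;> rw [he] <;>
        rw [Real.norm_eq_abs] <;>
        nlinarith [sq_abs w.1, sq_abs w.2, sq_nonneg w.1, sq_nonneg w.2]
    have hGabs : |(G2 x) w w| ≤ M * (w.1 ^ 2 + w.2 ^ 2) := by
      rw [← Real.norm_eq_abs]
      calc ‖(G2 x) w w‖ ≤ ‖G2 x‖ * ‖w‖ * ‖w‖ := by
            nlinarith [norm_nonneg ((G2 x) w), norm_nonneg w, norm_nonneg (G2 x)]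
        _ ≤ M * (w.1 ^ 2 + w.2 ^ 2) := by
            nlinarith [norm_nonneg w, norm_nonneg (G2 x),
              mul_nonneg (norm_nonneg (G2 x)) (norm_nonneg w)]
    have hη0 : 0 ≤ η := hη.1
    have hηM : η * M ≤ 15 * c := by
      have h2 : η * M ≤ (15 * c / (M + 1)) * M := mul_le_mul_of_nonneg_right hη.2 hM0
      have h3 : (15 * c / (M + 1)) * M ≤ 15 * c := by
        rw [div_mul_eq_mul_div, div_le_iff₀ (by linarith)]
        nlinarith
      linarith
    have hglb : -(M * (w.1 ^ 2 + w.2 ^ 2)) ≤ (G2 x) w w := (abs_le.mp hGabs).1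
    have hηg : -(η * M) * (w.1 ^ 2 + w.2 ^ 2) ≤ η * ((G2 x) w w) := by nlinarith
    have hev : F2 x w w = 30 * (D2 x.1 * w.1 * w.1) + 60 * (D2 x.2 * w.2 * w.2)
        + η * ((G2 x) w w) := by
      simp only [hF2def, hfstL, hsndL, ContinuousLinearMap.add_apply, ContinuousLinearMap.smul_apply,
        ContinuousLinearMap.smulRight_apply, ContinuousLinearMap.coe_fst',
        ContinuousLinearMap.coe_snd', smul_eq_mul]
      try ring
    rw [hev]
    nlinarith [mul_nonneg (sub_nonneg.mpr hcc1) (sq_nonneg w.1),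
      mul_nonneg (sub_nonneg.mpr hcc2) (sq_nonneg w.2),
      mul_le_mul_of_nonneg_right hηM hwpos.le, mul_pos hcpos hwpos,
      sq_nonneg w.1, sq_nonneg w.2]
  obtain ⟨key1, key2⟩ := seg_key (Ered vbond vnbd η) F1 F2 S hSconv hA hB hC
  have hpS : p ∈ S := ⟨Set.Ioo_subset_Icc_self hp.1, Set.Ioo_subset_Icc_self hp.2⟩
  constructor
  · intro h0
    have hF1p : F1 p = 0 := by rw [← (hA p hpS).fderiv]; exact h0
    exact key2 p hpS m hm (key1 p hpS hF1p) hmin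
  · rintro rfl
    have hnh : S ∈ nhds p := Filter.mem_of_superset
      ((isOpen_Ioo.prod isOpen_Ioo).mem_nhds hp)
      (Set.prod_mono Set.Ioo_subset_Icc_self Set.Ioo_subset_Icc_self)
    exact (hmin.isLocalMin hnh).fderiv_eq_zero
end

section
/- For η = 0 the unique minimizer of E_η over cl(I_bond) × cl(I_bond) is (1,1). Moreover, for every sufficiently small η > 0 the unique minimizer (a*_η, b*_η) satisfies a*_η ≤ 1 and b*_η ≤ 1. -/
/-- for `η = 0` the unique minimizer of `E_η` over `cl(I_bond)²` is `(1,1)`;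
for every sufficiently small `η > 0` every minimizer `(a*_η, b*_η)` satisfies
`a*_η ≤ 1` and `b*_η ≤ 1`. -/
theorem stmt3
    (vbond vnbd : ℝ → ℝ) (l u n1 n2 : ℝ)
    (hl0 : 0 < l) (hl1 : l < 1) (hu1 : 1 < u)
    (O : Set ℝ) (hO : IsOpen O) (hIccO : Set.Icc l u ⊆ O)
    (hvb_smooth : ContDiffOn ℝ (⊤ : ℕ∞) vbond O)
    (hvb_lb : ∀ x : ℝ, 0 ≤ x → -1 ≤ vbond x)
    (hvb_min : ∀ x : ℝ, 0 ≤ x → (vbond x = -1 ↔ x = 1))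
    (hvb_conv : ∀ x ∈ Set.Icc l u, 0 < deriv (deriv vbond) x)
    (hn1 : n1 < 2 * Real.sin (3 * Real.pi / 10))
    (hn2 : Real.sqrt 3 < n2)
    (hvn_smooth : ContDiffOn ℝ (⊤ : ℕ∞) vnbd (Set.Ioo n1 n2))
    (hvn_mono : MonotoneOn vnbd (Set.Ioo n1 n2))
    (hrange : ∀ a ∈ Set.Icc l u, ∀ b ∈ Set.Icc l u,
      2 * b * Real.sin (3 * Real.pi / 10) ∈ Set.Ioo n1 n2 ∧
      Real.sqrt (a ^ 2 + b ^ 2 + a * b) ∈ Set.Ioo n1 n2) :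
    -- for `η = 0` the unique minimizer is `(1,1)`
    (IsMinOn (Ered vbond vnbd 0) (Set.Icc l u ×ˢ Set.Icc l u) (1, 1) ∧
      ∀ p ∈ Set.Icc l u ×ˢ Set.Icc l u,
        IsMinOn (Ered vbond vnbd 0) (Set.Icc l u ×ˢ Set.Icc l u) p → p = (1, 1)) ∧
    -- for small `η > 0` the minimizer has both components `≤ 1`
    (∃ η₀ > (0:ℝ), ∀ η : ℝ, 0 < η → η ≤ η₀ →
      ∀ m ∈ Set.Icc l u ×ˢ Set.Icc l u,
        IsMinOn (Ered vbond vnbd η) (Set.Icc l u ×ˢ Set.Icc l u) m →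
        m.1 ≤ 1 ∧ m.2 ≤ 1) := by

  have h1mem : (1:ℝ) ∈ Set.Icc l u := ⟨hl1.le, hu1.le⟩
  have hb1 : vbond 1 = -1 := (hvb_min 1 zero_le_one).mpr rfl
  have hgt : ∀ x : ℝ, 0 < x → x ≠ 1 → -1 < vbond x := by
    intro x hx hne
    refine lt_of_le_of_ne (hvb_lb x hx.le) ?_
    intro h
    exact hne ((hvb_min x hx.le).mp h.symm)
  have hsin : 0 < Real.sin (3 * Real.pi / 10) :=
    Real.sin_pos_of_pos_of_lt_pi (by positivity) (by nlinarith [Real.pi_pos])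
  constructor
  · constructor
    · rw [isMinOn_iff]
      rintro ⟨a, b⟩ ⟨ha, hb⟩
      simp only [Ered, zero_mul, add_zero]
      have h1 := hvb_lb a (le_trans hl0.le ha.1)
      have h2 := hvb_lb b (le_trans hl0.le hb.1)
      rw [hb1]; linarith
    · rintro ⟨a, b⟩ ⟨ha, hb⟩ hmin
      have h := isMinOn_iff.mp hmin (1, 1) ⟨h1mem, h1mem⟩
      simp only [Ered, zero_mul, add_zero] at h
      rw [hb1] at h
      have ha0 : (0:ℝ) < a := lt_of_lt_of_le hl0 ha.1
      have hb0 : (0:ℝ) < b := lt_of_lt_of_le hl0 hb.1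
      have h1 := hvb_lb a ha0.le
      have h2 := hvb_lb b hb0.le
      have hva : vbond a = -1 := by linarith
      have hvb : vbond b = -1 := by linarith
      have : a = 1 := (hvb_min a ha0.le).mp hva
      have : b = 1 := (hvb_min b hb0.le).mp hvb
      simp_all
  · refine ⟨1, one_pos, fun η hη _ m hm hmin => ?_⟩
    obtain ⟨a, b⟩ := m
    obtain ⟨ha, hb⟩ := hm
    have ha0 : (0:ℝ) < a := lt_of_lt_of_le hl0 ha.1
    have hb0 : (0:ℝ) < b := lt_of_lt_of_le hl0 hb.1
    constructor
    · by_contra hc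
      push_neg at hc
      have hcomp := isMinOn_iff.mp hmin (1, b) ⟨h1mem, hb⟩
      simp only [Ered] at hcomp
      have hva : -1 < vbond a := hgt a ha0 (by linarith)
      have hsq : Real.sqrt ((1:ℝ) ^ 2 + b ^ 2 + 1 * b)
          ≤ Real.sqrt (a ^ 2 + b ^ 2 + a * b) :=
        Real.sqrt_le_sqrt (by nlinarith)
      have hV : vnbd (Real.sqrt ((1:ℝ) ^ 2 + b ^ 2 + 1 * b))
          ≤ vnbd (Real.sqrt (a ^ 2 + b ^ 2 + a * b)) :=
        hvn_mono (hrange 1 h1mem b hb).2 (hrange a ha b hb).2 hsq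
      have hmul : η * (60 * vnbd (2 * b * Real.sin (3 * Real.pi / 10)) +
            120 * vnbd (Real.sqrt ((1:ℝ) ^ 2 + b ^ 2 + 1 * b)))
          ≤ η * (60 * vnbd (2 * b * Real.sin (3 * Real.pi / 10)) +
            120 * vnbd (Real.sqrt (a ^ 2 + b ^ 2 + a * b))) := by
        apply mul_le_mul_of_nonneg_left _ hη.le
        exact add_le_add le_rfl (mul_le_mul_of_nonneg_left hV (by norm_num))
      rw [hb1] at hcomp
      linarith
    · by_contra hc
      push_neg at hc
      have hcomp := isMinOn_iff.mp hmin (a, 1) ⟨ha, h1mem⟩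
      simp only [Ered] at hcomp
      have hvb : -1 < vbond b := hgt b hb0 (by linarith)
      have hsq : Real.sqrt (a ^ 2 + (1:ℝ) ^ 2 + a * 1)
          ≤ Real.sqrt (a ^ 2 + b ^ 2 + a * b) :=
        Real.sqrt_le_sqrt (by nlinarith)
      have hV : vnbd (Real.sqrt (a ^ 2 + (1:ℝ) ^ 2 + a * 1))
          ≤ vnbd (Real.sqrt (a ^ 2 + b ^ 2 + a * b)) :=
        hvn_mono (hrange a ha 1 h1mem).2 (hrange a ha b hb).2 hsq
      have hsin2 : 2 * (1:ℝ) * Real.sin (3 * Real.pi / 10)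
          ≤ 2 * b * Real.sin (3 * Real.pi / 10) := by nlinarith
      have hV2 : vnbd (2 * (1:ℝ) * Real.sin (3 * Real.pi / 10))
          ≤ vnbd (2 * b * Real.sin (3 * Real.pi / 10)) :=
        hvn_mono (hrange a ha 1 h1mem).1 (hrange a ha b hb).1 hsin2
      have hmul : η * (60 * vnbd (2 * (1:ℝ) * Real.sin (3 * Real.pi / 10)) +
            120 * vnbd (Real.sqrt (a ^ 2 + (1:ℝ) ^ 2 + a * 1)))
          ≤ η * (60 * vnbd (2 * b * Real.sin (3 * Real.pi / 10)) +
            120 * vnbd (Real.sqrt (a ^ 2 + b ^ 2 + a * b))) := by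
        apply mul_le_mul_of_nonneg_left _ hη.le
        exact add_le_add (mul_le_mul_of_nonneg_left hV2 (by norm_num))
          (mul_le_mul_of_nonneg_left hV (by norm_num))
      rw [hb1] at hcomp
      linarith
end

section
/- Assume √3·v_nbd'(√3) ≠ σ·v_nbd'(σ), where σ = 2·sin(3π/10). Then, provided the open interval I_bond around 1 is chosen sufficiently small (depending on v_nbd) and η > 0 is sufficiently small, the unique minimizer (a*_η, b*_η) of E_η over cl(I_bond) × cl(I_bond) satisfies a*_η ≠ b*_η. -/
set_option maxHeartbeats 1000000


/-- if `√3·v_nbd'(√3) ≠ σ·v_nbd'(σ)` with `σ = 2 sin(3π/10)`, then for any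
sufficiently small open interval `I_bond = Ioo l u ∋ 1` and any sufficiently small `η > 0`
the unique minimizer `(a*_η, b*_η)` of `E_η` over `cl(I_bond)²` satisfies `a*_η ≠ b*_η`. -/
theorem stmt4
    (vbond vnbd : ℝ → ℝ) (L U n1 n2 : ℝ)
    (hL0 : 0 < L) (hL1 : L < 1) (hU1 : 1 < U)
    -- `v_bond` is smooth on (a neighborhood of) the ambient interval `[L,U]` around 1
    (O : Set ℝ) (hO : IsOpen O) (hIccO : Set.Icc L U ⊆ O)
    (hvb_smooth : ContDiffOn ℝ (⊤ : ℕ∞) vbond O)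
    (hvb_lb : ∀ x : ℝ, 0 ≤ x → -1 ≤ vbond x)
    (hvb_min : ∀ x : ℝ, 0 ≤ x → (vbond x = -1 ↔ x = 1))
    (hvb_conv : ∀ x ∈ Set.Icc L U, 0 < deriv (deriv vbond) x)
    -- `I_nbd = Ioo n1 n2` is a small open neighborhood of `[2 sin(3π/10), √3]`
    (hn1 : n1 < 2 * Real.sin (3 * Real.pi / 10))
    (hn2 : Real.sqrt 3 < n2)
    (hvn_smooth : ContDiffOn ℝ (⊤ : ℕ∞) vnbd (Set.Ioo n1 n2))
    (hvn_mono : MonotoneOn vnbd (Set.Ioo n1 n2))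
    -- the generic condition `√3·v_nbd'(√3) ≠ σ·v_nbd'(σ)`
    (hgeneric : Real.sqrt 3 * deriv vnbd (Real.sqrt 3) ≠
      2 * Real.sin (3 * Real.pi / 10) * deriv vnbd (2 * Real.sin (3 * Real.pi / 10))) :
    ∃ r > (0:ℝ), ∀ l' u' : ℝ, 1 - r ≤ l' → l' < 1 → 1 < u' → u' ≤ 1 + r →
      Set.Icc l' u' ⊆ Set.Icc L U →
      (∀ a ∈ Set.Icc l' u', ∀ b ∈ Set.Icc l' u',
        2 * b * Real.sin (3 * Real.pi / 10) ∈ Set.Ioo n1 n2 ∧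
        Real.sqrt (a ^ 2 + b ^ 2 + a * b) ∈ Set.Ioo n1 n2) →
      ∃ η₀ > (0:ℝ), ∀ η : ℝ, 0 < η → η ≤ η₀ →
        ∀ m ∈ Set.Icc l' u' ×ˢ Set.Icc l' u',
          IsMinOn (Ered vbond vnbd η) (Set.Icc l' u' ×ˢ Set.Icc l' u') m →
          m.1 ≠ m.2 := by
  set σ : ℝ := 2 * Real.sin (3 * Real.pi / 10) with hσdef
  have hσ3 : σ < Real.sqrt 3 := by
    have h : Real.sin (3 * Real.pi / 10) = Real.cos (Real.pi / 5) := by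
      rw [← Real.cos_pi_div_two_sub]; congr 1; ring
    rw [hσdef, h, Real.cos_pi_div_five]
    nlinarith [Real.sq_sqrt (show (0:ℝ) ≤ 5 by norm_num),
      Real.sq_sqrt (show (0:ℝ) ≤ 3 by norm_num),
      Real.sqrt_nonneg 5, Real.sqrt_nonneg 3, sq_nonneg (Real.sqrt 5 - 2)]
  have hmemσ : σ ∈ Set.Ioo n1 n2 := ⟨hn1, hσ3.trans hn2⟩
  have hmem3 : Real.sqrt 3 ∈ Set.Ioo n1 n2 := ⟨hn1.trans hσ3, hn2⟩
  set D := deriv vnbd with hDdef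
  have hDcont : ContinuousOn D (Set.Ioo n1 n2) :=
    hvn_smooth.continuousOn_deriv_of_isOpen isOpen_Ioo (by simp)
  have hD3 : ContinuousAt D ((fun t : ℝ => Real.sqrt 3 * t) 1) := by
    simpa using hDcont.continuousAt (isOpen_Ioo.mem_nhds hmem3)
  have hDσ : ContinuousAt D ((fun t : ℝ => σ * t) 1) := by
    simpa using hDcont.continuousAt (isOpen_Ioo.mem_nhds hmemσ)
  have hgc : ContinuousAt (fun t : ℝ => Real.sqrt 3 * D (Real.sqrt 3 * t) - σ * D (σ * t)) 1 := by
    apply ContinuousAt.sub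
    · exact ContinuousAt.mul continuousAt_const
        (hD3.comp ((continuous_const.mul continuous_id).continuousAt))
    · exact ContinuousAt.mul continuousAt_const
        (hDσ.comp ((continuous_const.mul continuous_id).continuousAt))
  have hne1 : (fun t : ℝ => Real.sqrt 3 * D (Real.sqrt 3 * t) - σ * D (σ * t)) 1 ≠ 0 := by
    simpa [mul_one] using sub_ne_zero.mpr hgeneric
  have hev := hgc.eventually_ne hne1
  obtain ⟨ε, hε, hball⟩ := Metric.eventually_nhds_iff.mp hev
  refine ⟨ε / 2, by positivity, ?_⟩
  intro l' u' hrl hl1 h1u hur hsubLU hargs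
  have hl'u' : l' ≤ u' := (hl1.trans h1u).le
  have hLU := (Set.Icc_subset_Icc_iff hl'u').mp hsubLU
  have hl'pos : 0 < l' := hL0.trans_le hLU.1
  have hvbdiff : ∀ x ∈ Set.Icc l' u', DifferentiableAt ℝ vbond x := fun x hx =>
    (hvb_smooth.differentiableOn (by simp)).differentiableAt
      (hO.mem_nhds (hIccO (hsubLU hx)))
  have hvndiff : ∀ y ∈ Set.Ioo n1 n2, DifferentiableAt ℝ vnbd y := fun y hy =>
    (hvn_smooth.differentiableOn (by simp)).differentiableAt (isOpen_Ioo.mem_nhds hy)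
  set S := Set.Icc l' u' ×ˢ Set.Icc l' u' with hSdef
  have hScomp : IsCompact S := isCompact_Icc.prod isCompact_Icc
  set F : ℝ × ℝ → ℝ := fun p =>
    60 * vnbd (2 * p.2 * Real.sin (3 * Real.pi / 10)) +
      120 * vnbd (Real.sqrt (p.1 ^ 2 + p.2 ^ 2 + p.1 * p.2)) with hFdef
  have hFcont : ContinuousOn F S := by
    have hvncont : ContinuousOn vnbd (Set.Ioo n1 n2) := hvn_smooth.continuousOn
    apply ContinuousOn.add
    · apply ContinuousOn.mul continuousOn_const
      exact hvncont.comp (by fun_prop) (fun p hp => (hargs p.1 hp.1 p.2 hp.2).1)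
    · apply ContinuousOn.mul continuousOn_const
      exact hvncont.comp (by fun_prop) (fun p hp => (hargs p.1 hp.1 p.2 hp.2).2)
  obtain ⟨M, hM⟩ := hScomp.exists_bound_of_continuousOn hFcont
  have h11S : ((1:ℝ), (1:ℝ)) ∈ S := ⟨⟨hl1.le, h1u.le⟩, ⟨hl1.le, h1u.le⟩⟩
  have hM0 : 0 ≤ M := le_trans (norm_nonneg _) (hM _ h11S)
  have hvb1 : vbond 1 = -1 := (hvb_min 1 zero_le_one).mpr rfl
  have hvbl : -1 < vbond l' :=
    lt_of_le_of_ne (hvb_lb l' hl'pos.le)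
      (fun h => hl1.ne ((hvb_min l' hl'pos.le).mp h.symm))
  have hvbu : -1 < vbond u' :=
    lt_of_le_of_ne (hvb_lb u' (zero_le_one.trans h1u.le))
      (fun h => h1u.ne' ((hvb_min u' (zero_le_one.trans h1u.le)).mp h.symm))
  set δ : ℝ := min (vbond l' + 1) (vbond u' + 1) with hδdef
  have hδpos : 0 < δ := lt_min (by linarith) (by linarith)
  refine ⟨15 * δ / (M + 1), by positivity, ?_⟩
  intro η hη hηle m hmS hminOn heq
  obtain ⟨a, b⟩ := m
  simp only at heq
  subst heq
  have hm1 : a ∈ Set.Icc l' u' := hmS.1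
  have ha0 : 0 < a := hl'pos.trans_le hm1.1
  have hmin' : ∀ p ∈ S, Ered vbond vnbd η (a, a) ≤ Ered vbond vnbd η p :=
    fun p hp => isMinOn_iff.mp hminOn p hp
  -- boundary exclusion
  have hFm := hM _ hmS
  have hF11 := hM _ h11S
  rw [Real.norm_eq_abs, abs_le] at hFm hF11
  have hηM : 2 * η * M < 30 * δ := by
    have hM1 : (0:ℝ) < M + 1 := by linarith
    have h1 : η * (M + 1) ≤ (15 * δ / (M + 1)) * (M + 1) :=
      mul_le_mul_of_nonneg_right hηle hM1.le
    have h2 : (15 * δ / (M + 1)) * (M + 1) = 15 * δ := by field_simp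
    nlinarith
  have hmain : ¬ (δ ≤ vbond a + 1) := by
    intro hge
    have hle := hmin' (1, 1) h11S
    have hEm : Ered vbond vnbd η (a, a) = 30 * vbond a + 60 * vbond a + η * F (a, a) := by
      simp [Ered, hFdef]
    have hE1 : Ered vbond vnbd η (1, 1) = -90 + η * F (1, 1) := by
      simp [Ered, hFdef, hvb1]; ring
    have hvba : -1 ≤ vbond a := hvb_lb a ha0.le
    have h1 : -(η * M) ≤ η * F (a, a) := by nlinarith [hFm.1, hη.le]
    have h2 : η * F (1, 1) ≤ η * M := by nlinarith [hF11.2, hη.le]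
    rw [hEm, hE1] at hle
    nlinarith
  have hIoo : a ∈ Set.Ioo l' u' := by
    by_contra hno
    have h1 : ¬ (l' < a ∧ a < u') := by simpa [Set.mem_Ioo] using hno
    rcases not_and_or.mp h1 with h | h
    · have hae : a = l' := le_antisymm (not_lt.mp h) hm1.1
      exact hmain (hae ▸ min_le_left _ _)
    · have hae : a = u' := le_antisymm hm1.2 (not_lt.mp h)
      exact hmain (hae ▸ min_le_right _ _)
  -- the critical-point equations
  have hqpos : (0:ℝ) < a ^ 2 + a ^ 2 + a * a := by nlinarith
  set s : ℝ := Real.sqrt (a ^ 2 + a ^ 2 + a * a) with hsdef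
  have hspos : 0 < s := Real.sqrt_pos.mpr hqpos
  have hs3 : s = Real.sqrt 3 * a := by
    rw [hsdef, show a ^ 2 + a ^ 2 + a * a = 3 * a ^ 2 by ring,
      Real.sqrt_mul (by norm_num : (0:ℝ) ≤ 3), Real.sqrt_sq ha0.le]
  have hmem_s : s ∈ Set.Ioo n1 n2 := (hargs a hm1 a hm1).2
  have hmem_σa : 2 * a * Real.sin (3 * Real.pi / 10) ∈ Set.Ioo n1 n2 := (hargs a hm1 a hm1).1
  have hBd : HasDerivAt vbond (deriv vbond a) a := (hvbdiff a hm1).hasDerivAt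
  have hsqrt : HasDerivAt Real.sqrt (1 / (2 * s)) (a ^ 2 + a ^ 2 + a * a) :=
    Real.hasDerivAt_sqrt (ne_of_gt hqpos)
  have hDval : HasDerivAt vnbd (D s) s := (hvndiff s hmem_s).hasDerivAt
  have hDσval : HasDerivAt vnbd (D (2 * a * Real.sin (3 * Real.pi / 10)))
      (2 * a * Real.sin (3 * Real.pi / 10)) := (hvndiff _ hmem_σa).hasDerivAt
  -- slice in the first variable
  have hq1 : HasDerivAt (fun x : ℝ => x ^ 2 + a ^ 2 + x * a) (2 * a + a) a := by
    have h := ((hasDerivAt_pow 2 a).add_const (a ^ 2)).add ((hasDerivAt_id a).mul_const a)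
    refine h.congr_deriv ?_
    push_cast; ring
  have hcomp1 : HasDerivAt (fun x : ℝ => Real.sqrt (x ^ 2 + a ^ 2 + x * a))
      (1 / (2 * s) * (2 * a + a)) a := hsqrt.comp a hq1
  have hcomp2 : HasDerivAt (fun x : ℝ => vnbd (Real.sqrt (x ^ 2 + a ^ 2 + x * a)))
      (D s * (1 / (2 * s) * (2 * a + a))) a := by
    have : HasDerivAt vnbd (D s) (Real.sqrt (a ^ 2 + a ^ 2 + a * a)) := hDval
    exact this.comp a hcomp1
  have hd1 : HasDerivAt (fun x : ℝ => 30 * vbond x + 60 * vbond a +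
      η * (60 * vnbd (2 * a * Real.sin (3 * Real.pi / 10)) +
        120 * vnbd (Real.sqrt (x ^ 2 + a ^ 2 + x * a))))
      (30 * deriv vbond a + η * (120 * (D s * (1 / (2 * s) * (2 * a + a))))) a :=
    ((hBd.const_mul 30).add_const (60 * vbond a)).add
      (((hcomp2.const_mul 120).const_add
        (60 * vnbd (2 * a * Real.sin (3 * Real.pi / 10)))).const_mul η)
  have hloc1 : IsLocalMin (fun x : ℝ => 30 * vbond x + 60 * vbond a +
      η * (60 * vnbd (2 * a * Real.sin (3 * Real.pi / 10)) +
        120 * vnbd (Real.sqrt (x ^ 2 + a ^ 2 + x * a)))) a := by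
    apply IsMinOn.isLocalMin _ (Icc_mem_nhds hIoo.1 hIoo.2)
    apply isMinOn_iff.mpr
    intro x hx
    have h := hmin' (x, a) ⟨hx, hm1⟩
    simpa only [Ered] using h
  have hz1 : 30 * deriv vbond a + η * (120 * (D s * (1 / (2 * s) * (2 * a + a)))) = 0 := by
    have h := hloc1.deriv_eq_zero
    rwa [hd1.deriv] at h
  -- slice in the second variable
  have hq2 : HasDerivAt (fun y : ℝ => a ^ 2 + y ^ 2 + a * y) (2 * a + a) a := by
    have h := ((hasDerivAt_pow 2 a).const_add (a ^ 2)).add ((hasDerivAt_id a).const_mul a)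
    refine h.congr_deriv ?_
    push_cast; ring
  have hinσ : HasDerivAt (fun y : ℝ => 2 * y * Real.sin (3 * Real.pi / 10))
      (2 * Real.sin (3 * Real.pi / 10)) a := by
    have h := ((hasDerivAt_id a).const_mul 2).mul_const (Real.sin (3 * Real.pi / 10))
    refine h.congr_deriv ?_
    ring
  have hcompσ : HasDerivAt (fun y : ℝ => vnbd (2 * y * Real.sin (3 * Real.pi / 10)))
      (D (2 * a * Real.sin (3 * Real.pi / 10)) * (2 * Real.sin (3 * Real.pi / 10))) a :=
    hDσval.comp a hinσ
  have hcomp2b : HasDerivAt (fun y : ℝ => vnbd (Real.sqrt (a ^ 2 + y ^ 2 + a * y)))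
      (D s * (1 / (2 * s) * (2 * a + a))) a := by
    have h1 : HasDerivAt (fun y : ℝ => Real.sqrt (a ^ 2 + y ^ 2 + a * y))
        (1 / (2 * s) * (2 * a + a)) a := hsqrt.comp a hq2
    have : HasDerivAt vnbd (D s) (Real.sqrt (a ^ 2 + a ^ 2 + a * a)) := hDval
    exact this.comp a h1
  have hd2 : HasDerivAt (fun y : ℝ => 30 * vbond a + 60 * vbond y +
      η * (60 * vnbd (2 * y * Real.sin (3 * Real.pi / 10)) +
        120 * vnbd (Real.sqrt (a ^ 2 + y ^ 2 + a * y))))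
      (60 * deriv vbond a +
        η * (60 * (D (2 * a * Real.sin (3 * Real.pi / 10)) * (2 * Real.sin (3 * Real.pi / 10))) +
          120 * (D s * (1 / (2 * s) * (2 * a + a))))) a :=
    ((hBd.const_mul 60).const_add (30 * vbond a)).add
      (((hcompσ.const_mul 60).add (hcomp2b.const_mul 120)).const_mul η)
  have hloc2 : IsLocalMin (fun y : ℝ => 30 * vbond a + 60 * vbond y +
      η * (60 * vnbd (2 * y * Real.sin (3 * Real.pi / 10)) +
        120 * vnbd (Real.sqrt (a ^ 2 + y ^ 2 + a * y)))) a := by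
    apply IsMinOn.isLocalMin _ (Icc_mem_nhds hIoo.1 hIoo.2)
    apply isMinOn_iff.mpr
    intro y hy
    have h := hmin' (a, y) ⟨hm1, hy⟩
    simpa only [Ered] using h
  have hz2 : 60 * deriv vbond a +
      η * (60 * (D (2 * a * Real.sin (3 * Real.pi / 10)) * (2 * Real.sin (3 * Real.pi / 10))) +
        120 * (D s * (1 / (2 * s) * (2 * a + a)))) = 0 := by
    have h := hloc2.deriv_eq_zero
    rwa [hd2.deriv] at h
  -- combine the two equations
  have hmul : η * (120 * (D s * (1 / (2 * s) * (2 * a + a)))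
      - 60 * (D (2 * a * Real.sin (3 * Real.pi / 10)) * (2 * Real.sin (3 * Real.pi / 10)))) = 0 := by
    linear_combination 2 * hz1 - hz2
  have hcancel : 120 * (D s * (1 / (2 * s) * (2 * a + a)))
      - 60 * (D (2 * a * Real.sin (3 * Real.pi / 10)) * (2 * Real.sin (3 * Real.pi / 10))) = 0 := by
    rcases mul_eq_zero.mp hmul with h | h
    · exact absurd h hη.ne'
    · exact h
  have hP : 2 * (1 / (2 * s) * (2 * a + a)) = Real.sqrt 3 := by
    have h3 : Real.sqrt 3 * Real.sqrt 3 = 3 := Real.mul_self_sqrt (by norm_num)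
    rw [hs3]
    have h30 : Real.sqrt 3 ≠ 0 := by positivity
    field_simp
    nlinarith [h3]
  have hσa : 2 * a * Real.sin (3 * Real.pi / 10) = σ * a := by rw [hσdef]; ring
  have hfinal : Real.sqrt 3 * D (Real.sqrt 3 * a) - σ * D (σ * a) = 0 := by
    rw [← hs3, ← hσa]
    linear_combination hcancel / 60 - D s * hP -
      D (2 * a * Real.sin (3 * Real.pi / 10)) * hσdef
  have hdist : dist a 1 < ε := by
    rw [Real.dist_eq, abs_lt]
    constructor <;> [linarith [hm1.1]; linarith [hm1.2]]
  exact hball hdist hfinal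
end

section
/- Assume √3·v_nbd'(√3) ≠ σ·v_nbd'(σ), where σ = 2·sin(3π/10). Then, provided the open interval I_bond around 1 is chosen sufficiently small (depending on v_nbd) and η > 0 is sufficiently small, the unique minimizer (a*_η, b*_η) of E_η over cl(I_bond) × cl(I_bond) satisfies sgn(b*_η − a*_η) = sgn(√3·v_nbd'(√3) − σ·v_nbd'(σ)). -/
/-- The non-bonded part of the reduced energy. -/
noncomputable def Nfun (vnbd : ℝ → ℝ) (p : ℝ × ℝ) : ℝ :=
  60 * vnbd (2 * p.2 * Real.sin (3 * Real.pi / 10)) +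
    120 * vnbd (Real.sqrt (p.1 ^ 2 + p.2 ^ 2 + p.1 * p.2))

/-- The quantity whose sign governs `sgn(b - a)` at a critical point. -/
noncomputable def gfun (vnbd : ℝ → ℝ) (p : ℝ × ℝ) : ℝ :=
  3 * p.1 * deriv vnbd (Real.sqrt (p.1 ^ 2 + p.2 ^ 2 + p.1 * p.2)) /
    Real.sqrt (p.1 ^ 2 + p.2 ^ 2 + p.1 * p.2) -
  2 * Real.sin (3 * Real.pi / 10) * deriv vnbd (2 * p.2 * Real.sin (3 * Real.pi / 10))

lemma sqrt3_pos : (0:ℝ) < Real.sqrt 3 := Real.sqrt_pos.mpr (by norm_num)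

lemma s11_eq : Real.sqrt ((1:ℝ) ^ 2 + 1 ^ 2 + 1 * 1) = Real.sqrt 3 := by norm_num

lemma gfun_val (vnbd : ℝ → ℝ) :
    gfun vnbd (1, 1) =
      Real.sqrt 3 * deriv vnbd (Real.sqrt 3) -
        2 * Real.sin (3 * Real.pi / 10) * deriv vnbd (2 * Real.sin (3 * Real.pi / 10)) := by
  have h : gfun vnbd (1, 1) =
      3 * 1 * deriv vnbd (Real.sqrt ((1:ℝ) ^ 2 + 1 ^ 2 + 1 * 1)) /
        Real.sqrt ((1:ℝ) ^ 2 + 1 ^ 2 + 1 * 1) -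
      2 * Real.sin (3 * Real.pi / 10) * deriv vnbd (2 * 1 * Real.sin (3 * Real.pi / 10)) := rfl
  rw [h, s11_eq, show (2:ℝ) * 1 * Real.sin (3 * Real.pi / 10) = 2 * Real.sin (3 * Real.pi / 10) by ring]
  have hs3 : Real.sqrt 3 * Real.sqrt 3 = 3 := Real.mul_self_sqrt (by norm_num)
  have : 3 * 1 * deriv vnbd (Real.sqrt 3) / Real.sqrt 3 = Real.sqrt 3 * deriv vnbd (Real.sqrt 3) := by
    rw [div_eq_iff (ne_of_gt sqrt3_pos)]
    linear_combination (-(deriv vnbd (Real.sqrt 3))) * hs3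
  rw [this]

lemma gfun_cont (vnbd : ℝ → ℝ) (n1 n2 : ℝ)
    (hvn_smooth : ContDiffOn ℝ (⊤ : ℕ∞) vnbd (Set.Ioo n1 n2))
    (h3 : Real.sqrt 3 ∈ Set.Ioo n1 n2)
    (hsig : 2 * Real.sin (3 * Real.pi / 10) ∈ Set.Ioo n1 n2) :
    ContinuousAt (gfun vnbd) (1, 1) := by
  have hdvn_cont : ContinuousOn (deriv vnbd) (Set.Ioo n1 n2) :=
    hvn_smooth.continuousOn_deriv_of_isOpen isOpen_Ioo (by simp)
  have hdvn_at : ∀ t ∈ Set.Ioo n1 n2, ContinuousAt (deriv vnbd) t := fun t ht =>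
    hdvn_cont.continuousAt (isOpen_Ioo.mem_nhds ht)
  have hsc : ContinuousAt (fun p : ℝ × ℝ => Real.sqrt (p.1 ^ 2 + p.2 ^ 2 + p.1 * p.2))
      ((1:ℝ), (1:ℝ)) := by fun_prop
  have hsc3 : ContinuousAt (deriv vnbd)
      ((fun p : ℝ × ℝ => Real.sqrt (p.1 ^ 2 + p.2 ^ 2 + p.1 * p.2)) (1, 1)) := by
    simp only [show ((fun p : ℝ × ℝ => Real.sqrt (p.1 ^ 2 + p.2 ^ 2 + p.1 * p.2)) (1, 1)) =
      Real.sqrt ((1:ℝ) ^ 2 + 1 ^ 2 + 1 * 1) from rfl, s11_eq]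
    exact hdvn_at _ h3
  have hlin : ContinuousAt (fun p : ℝ × ℝ => 2 * p.2 * Real.sin (3 * Real.pi / 10))
      ((1:ℝ), (1:ℝ)) := by fun_prop
  have hW : ContinuousAt (deriv vnbd)
      ((fun p : ℝ × ℝ => 2 * p.2 * Real.sin (3 * Real.pi / 10)) (1, 1)) := by
    simp only [show ((fun p : ℝ × ℝ => 2 * p.2 * Real.sin (3 * Real.pi / 10)) (1, 1)) =
      2 * (1:ℝ) * Real.sin (3 * Real.pi / 10) from rfl]
    rw [show (2:ℝ) * 1 * Real.sin (3 * Real.pi / 10) = 2 * Real.sin (3 * Real.pi / 10) by ring]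
    exact hdvn_at _ hsig
  have hcomp1' : ContinuousAt
      (deriv vnbd ∘ fun p : ℝ × ℝ => Real.sqrt (p.1 ^ 2 + p.2 ^ 2 + p.1 * p.2)) (1, 1) :=
    ContinuousAt.comp hsc3 hsc
  have hcomp1 : ContinuousAt (fun p : ℝ × ℝ =>
      deriv vnbd (Real.sqrt (p.1 ^ 2 + p.2 ^ 2 + p.1 * p.2))) (1, 1) := hcomp1'
  have hcomp2' : ContinuousAt
      (deriv vnbd ∘ fun p : ℝ × ℝ => 2 * p.2 * Real.sin (3 * Real.pi / 10)) (1, 1) :=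
    ContinuousAt.comp hW hlin
  have hcomp2 : ContinuousAt (fun p : ℝ × ℝ =>
      deriv vnbd (2 * p.2 * Real.sin (3 * Real.pi / 10))) (1, 1) := hcomp2'
  have h1 : ContinuousAt (fun p : ℝ × ℝ =>
      3 * p.1 * deriv vnbd (Real.sqrt (p.1 ^ 2 + p.2 ^ 2 + p.1 * p.2))) (1, 1) :=
    (continuousAt_const.mul continuousAt_fst).mul hcomp1
  have h2 : ContinuousAt (fun p : ℝ × ℝ =>
      deriv vnbd (2 * p.2 * Real.sin (3 * Real.pi / 10))) (1, 1) := hcomp2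
  have hden : (fun p : ℝ × ℝ => Real.sqrt (p.1 ^ 2 + p.2 ^ 2 + p.1 * p.2)) (1, 1) ≠ 0 := by
    simp only [show ((fun p : ℝ × ℝ => Real.sqrt (p.1 ^ 2 + p.2 ^ 2 + p.1 * p.2)) (1, 1)) =
      Real.sqrt ((1:ℝ) ^ 2 + 1 ^ 2 + 1 * 1) from rfl, s11_eq]
    exact ne_of_gt sqrt3_pos
  exact (h1.div hsc hden).sub (continuousAt_const.mul h2)

lemma sigma_lt_sqrt3 : 2 * Real.sin (3 * Real.pi / 10) < Real.sqrt 3 := by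
  have hpi : (0:ℝ) < Real.pi := Real.pi_pos
  have h := Real.strictMonoOn_sin
    (Set.mem_Icc.mpr ⟨by linarith, by linarith⟩ : 3 * Real.pi / 10 ∈ Set.Icc (-(Real.pi/2)) (Real.pi/2))
    (Set.mem_Icc.mpr ⟨by linarith, by linarith⟩ : Real.pi / 3 ∈ Set.Icc (-(Real.pi/2)) (Real.pi/2))
    (by linarith)
  rw [Real.sin_pi_div_three] at h
  linarith

lemma key_eq (vbond vnbd : ℝ → ℝ) (η a b : ℝ)
    (ha0 : 0 < a) (hb0 : 0 < b)
    (hdva : DifferentiableAt ℝ vbond a) (hdvb : DifferentiableAt ℝ vbond b)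
    (hdiff_s : DifferentiableAt ℝ vnbd (Real.sqrt (a ^ 2 + b ^ 2 + a * b)))
    (hdiff_sig : DifferentiableAt ℝ vnbd (2 * b * Real.sin (3 * Real.pi / 10)))
    (hlmin_a : IsLocalMin (fun x => Ered vbond vnbd η (x, b)) a)
    (hlmin_b : IsLocalMin (fun y => Ered vbond vnbd η (a, y)) b) :
    deriv vbond b - deriv vbond a = η * gfun vnbd (a, b) := by
  have hq_pos : 0 < a ^ 2 + b ^ 2 + a * b := by positivity
  set s : ℝ := Real.sqrt (a ^ 2 + b ^ 2 + a * b) with hs_def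
  have hs_pos : 0 < s := Real.sqrt_pos.mpr hq_pos
  have hs_ne : s ≠ 0 := ne_of_gt hs_pos
  set sn : ℝ := Real.sin (3 * Real.pi / 10) with hsn_def
  have hpoly_a : HasDerivAt (fun x : ℝ => x ^ 2 + b ^ 2 + x * b) (2 * a + b) a := by
    have h := ((hasDerivAt_pow 2 a).add_const (b ^ 2)).add ((hasDerivAt_id a).mul_const b)
    refine h.congr_deriv ?_
    push_cast
    ring
  have hsq_a : HasDerivAt (fun x : ℝ => Real.sqrt (x ^ 2 + b ^ 2 + x * b))
      ((2 * a + b) / (2 * s)) a := hpoly_a.sqrt (ne_of_gt hq_pos)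
  have hvn_s : HasDerivAt vnbd (deriv vnbd s) s := hdiff_s.hasDerivAt
  have hcomp_a : HasDerivAt (fun x : ℝ => vnbd (Real.sqrt (x ^ 2 + b ^ 2 + x * b)))
      (deriv vnbd s * ((2 * a + b) / (2 * s))) a := hvn_s.comp a hsq_a
  have hfa : HasDerivAt (fun x => Ered vbond vnbd η (x, b))
      (30 * deriv vbond a + η * (120 * (deriv vnbd s * ((2 * a + b) / (2 * s))))) a := by
    exact ((hdva.hasDerivAt.const_mul (30:ℝ)).add_const (60 * vbond b)).add
      (((hcomp_a.const_mul (120:ℝ)).const_add (60 * vnbd (2 * b * sn))).const_mul η)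
  have hpoly_b : HasDerivAt (fun y : ℝ => a ^ 2 + y ^ 2 + a * y) (2 * b + a) b := by
    have h := ((hasDerivAt_pow 2 b).const_add (a ^ 2)).add ((hasDerivAt_id b).const_mul a)
    refine h.congr_deriv ?_
    push_cast
    ring
  have hsq_b : HasDerivAt (fun y : ℝ => Real.sqrt (a ^ 2 + y ^ 2 + a * y))
      ((2 * b + a) / (2 * s)) b := by
    have h := hpoly_b.sqrt (x := b) (by simpa using (ne_of_gt hq_pos))
    convert h using 2
  have hcomp_b : HasDerivAt (fun y : ℝ => vnbd (Real.sqrt (a ^ 2 + y ^ 2 + a * y)))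
      (deriv vnbd s * ((2 * b + a) / (2 * s))) b := hvn_s.comp b hsq_b
  have hlin_b : HasDerivAt (fun y : ℝ => 2 * y * sn) (2 * sn) b := by
    have h := (hasDerivAt_id b).const_mul (2:ℝ) |>.mul_const sn
    refine h.congr_deriv ?_
    ring
  have hvn_sig : HasDerivAt vnbd (deriv vnbd (2 * b * sn)) (2 * b * sn) := hdiff_sig.hasDerivAt
  have hcomp_sig : HasDerivAt (fun y : ℝ => vnbd (2 * y * sn))
      (deriv vnbd (2 * b * sn) * (2 * sn)) b := hvn_sig.comp b hlin_b
  have hfb : HasDerivAt (fun y => Ered vbond vnbd η (a, y))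
      (60 * deriv vbond b +
        η * (60 * (deriv vnbd (2 * b * sn) * (2 * sn)) +
          120 * (deriv vnbd s * ((2 * b + a) / (2 * s))))) b := by
    exact (((hdvb.hasDerivAt.const_mul (60:ℝ)).const_add (30 * vbond a))).add
      (((hcomp_sig.const_mul (60:ℝ)).add (hcomp_b.const_mul (120:ℝ))).const_mul η)
  have hE1 := hlmin_a.hasDerivAt_eq_zero hfa
  have hE2 := hlmin_b.hasDerivAt_eq_zero hfb
  have hgf : gfun vnbd (a, b) = 3 * a * deriv vnbd s / s - 2 * sn * deriv vnbd (2 * b * sn) := rfl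
  rw [hgf]
  have h2s : (2:ℝ) * s ≠ 0 := by positivity
  field_simp at hE1 hE2 ⊢
  ring_nf at hE1 hE2 ⊢
  nlinarith [hE1, hE2]

/-- if `√3·v_nbd'(√3) ≠ σ·v_nbd'(σ)` with `σ = 2 sin(3π/10)`, then for any
sufficiently small open interval `I_bond = Ioo l u ∋ 1` and any sufficiently small `η > 0`
the unique minimizer `(a*_η, b*_η)` of `E_η` over `cl(I_bond)²` satisfies
`sgn(b*_η − a*_η) = sgn(√3·v_nbd′(√3) − σ·v_nbd′(σ))`. -/
theorem stmt5
    (vbond vnbd : ℝ → ℝ) (L U n1 n2 : ℝ)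
    (hL0 : 0 < L) (hL1 : L < 1) (hU1 : 1 < U)
    -- `v_bond` is smooth on (a neighborhood of) the ambient interval `[L,U]` around 1
    (O : Set ℝ) (hO : IsOpen O) (hIccO : Set.Icc L U ⊆ O)
    (hvb_smooth : ContDiffOn ℝ (⊤ : ℕ∞) vbond O)
    (hvb_lb : ∀ x : ℝ, 0 ≤ x → -1 ≤ vbond x)
    (hvb_min : ∀ x : ℝ, 0 ≤ x → (vbond x = -1 ↔ x = 1))
    (hvb_conv : ∀ x ∈ Set.Icc L U, 0 < deriv (deriv vbond) x)
    -- `I_nbd = Ioo n1 n2` is a small open neighborhood of `[2 sin(3π/10), √3]`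
    (hn1 : n1 < 2 * Real.sin (3 * Real.pi / 10))
    (hn2 : Real.sqrt 3 < n2)
    (hvn_smooth : ContDiffOn ℝ (⊤ : ℕ∞) vnbd (Set.Ioo n1 n2))
    (hvn_mono : MonotoneOn vnbd (Set.Ioo n1 n2))
    -- the generic condition `√3·v_nbd'(√3) ≠ σ·v_nbd'(σ)`
    (hgeneric : Real.sqrt 3 * deriv vnbd (Real.sqrt 3) ≠
      2 * Real.sin (3 * Real.pi / 10) * deriv vnbd (2 * Real.sin (3 * Real.pi / 10))) :
    ∃ r > (0:ℝ), ∀ l' u' : ℝ, 1 - r ≤ l' → l' < 1 → 1 < u' → u' ≤ 1 + r →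
      Set.Icc l' u' ⊆ Set.Icc L U →
      (∀ a ∈ Set.Icc l' u', ∀ b ∈ Set.Icc l' u',
        2 * b * Real.sin (3 * Real.pi / 10) ∈ Set.Ioo n1 n2 ∧
        Real.sqrt (a ^ 2 + b ^ 2 + a * b) ∈ Set.Ioo n1 n2) →
      ∃ η₀ > (0:ℝ), ∀ η : ℝ, 0 < η → η ≤ η₀ →
        ∀ m ∈ Set.Icc l' u' ×ˢ Set.Icc l' u',
          IsMinOn (Ered vbond vnbd η) (Set.Icc l' u' ×ˢ Set.Icc l' u') m →
          Real.sign (m.2 - m.1) =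
            Real.sign (Real.sqrt 3 * deriv vnbd (Real.sqrt 3) -
              2 * Real.sin (3 * Real.pi / 10) * deriv vnbd (2 * Real.sin (3 * Real.pi / 10))) := by
  set D : ℝ := Real.sqrt 3 * deriv vnbd (Real.sqrt 3) -
      2 * Real.sin (3 * Real.pi / 10) * deriv vnbd (2 * Real.sin (3 * Real.pi / 10)) with hD_def
  have hD0 : D ≠ 0 := sub_ne_zero.mpr hgeneric
  have hDabs : 0 < |D| := abs_pos.mpr hD0
  have hpi : (0:ℝ) < Real.pi := Real.pi_pos
  have hsn_pos : 0 < Real.sin (3 * Real.pi / 10) :=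
    Real.sin_pos_of_pos_of_lt_pi (by linarith) (by linarith)
  have hsig_mem : 2 * Real.sin (3 * Real.pi / 10) ∈ Set.Ioo n1 n2 :=
    ⟨hn1, lt_trans sigma_lt_sqrt3 hn2⟩
  have hsqrt3_mem : Real.sqrt 3 ∈ Set.Ioo n1 n2 :=
    ⟨lt_trans hn1 sigma_lt_sqrt3, hn2⟩
  -- strict monotonicity of deriv vbond on [L, U]
  have hsm : StrictMonoOn (deriv vbond) (Set.Icc L U) := by
    apply strictMonoOn_of_deriv_pos (convex_Icc L U)
    · exact (hvb_smooth.continuousOn_deriv_of_isOpen hO (by simp)).mono hIccO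
    · intro x hx
      rw [interior_Icc] at hx
      exact hvb_conv x (Set.Ioo_subset_Icc_self hx)
  -- continuity of gfun at (1,1) gives an ε₀-ball where |gfun - D| < |D|
  have hg_cont : ContinuousAt (gfun vnbd) (1, 1) := gfun_cont vnbd n1 n2 hvn_smooth hsqrt3_mem hsig_mem
  have habs_cont : ContinuousAt (fun p => |gfun vnbd p - D|) (1, 1) :=
    (hg_cont.sub continuousAt_const).abs
  have hev : (fun p => |gfun vnbd p - D|) ⁻¹' Set.Iio |D| ∈ nhds ((1:ℝ), (1:ℝ)) := by
    apply habs_cont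
    rw [show (fun p => |gfun vnbd p - D|) ((1:ℝ),(1:ℝ)) = |gfun vnbd (1,1) - D| from rfl,
      gfun_val, ← hD_def, sub_self, abs_zero]
    exact Iio_mem_nhds hDabs
  obtain ⟨ε₀, hε₀, hball⟩ := Metric.mem_nhds_iff.mp hev
  refine ⟨ε₀ / 2, by positivity, ?_⟩
  intro l' u' hrl hl1 hu1 hru hsub hmem
  have hl'u' : l' ≤ u' := by linarith
  have hLl' : L ≤ l' := (hsub (Set.left_mem_Icc.mpr hl'u')).1
  have hu'U : u' ≤ U := (hsub (Set.right_mem_Icc.mpr hl'u')).2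
  have hl'0 : 0 < l' := lt_of_lt_of_le hL0 hLl'
  have hQcomp : IsCompact (Set.Icc l' u' ×ˢ Set.Icc l' u') := isCompact_Icc.prod isCompact_Icc
  have h11Q : ((1:ℝ), (1:ℝ)) ∈ Set.Icc l' u' ×ˢ Set.Icc l' u' :=
    ⟨⟨le_of_lt hl1, le_of_lt hu1⟩, ⟨le_of_lt hl1, le_of_lt hu1⟩⟩
  -- bound on the non-bonded part
  have hvn_contOn : ∀ t ∈ Set.Ioo n1 n2, ContinuousAt vnbd t := fun t ht =>
    (hvn_smooth.contDiffAt (isOpen_Ioo.mem_nhds ht)).continuousAt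
  have hNcont : ContinuousOn (Nfun vnbd) (Set.Icc l' u' ×ˢ Set.Icc l' u') := by
    intro p hp
    have h1 := (hmem p.1 hp.1 p.2 hp.2).1
    have h2 := (hmem p.1 hp.1 p.2 hp.2).2
    have c1' : ContinuousAt (vnbd ∘ fun p : ℝ × ℝ => 2 * p.2 * Real.sin (3 * Real.pi / 10)) p :=
      ContinuousAt.comp (hvn_contOn _ h1) (by fun_prop)
    have c1 : ContinuousAt (fun p : ℝ × ℝ => vnbd (2 * p.2 * Real.sin (3 * Real.pi / 10))) p := c1'
    have c2' : ContinuousAt (vnbd ∘ fun p : ℝ × ℝ => Real.sqrt (p.1 ^ 2 + p.2 ^ 2 + p.1 * p.2)) p :=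
      ContinuousAt.comp (hvn_contOn _ h2) (by fun_prop)
    have c2 : ContinuousAt (fun p : ℝ × ℝ =>
        vnbd (Real.sqrt (p.1 ^ 2 + p.2 ^ 2 + p.1 * p.2))) p := c2'
    exact ((continuousAt_const.mul c1).add (continuousAt_const.mul c2)).continuousWithinAt
  obtain ⟨M, hM⟩ := hQcomp.exists_bound_of_continuousOn hNcont
  have hM0 : 0 ≤ M := le_trans (norm_nonneg _) (hM _ h11Q)
  -- the gap δ
  set ε : ℝ := min (1 - l') (u' - 1) / 2 with hε_def
  have hε_pos : 0 < ε := by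
    have : 0 < min (1 - l') (u' - 1) := lt_min (by linarith) (by linarith)
    positivity
  have hgap : ∃ δ > (0:ℝ), ∀ x ∈ Set.Icc l' u', ε ≤ |x - 1| → -1 + δ ≤ vbond x := by
    set K : Set ℝ := Set.Icc l' u' ∩ {x | ε ≤ |x - 1|} with hK_def
    have hKcl : IsClosed {x : ℝ | ε ≤ |x - 1|} := by
      have : {x : ℝ | ε ≤ |x - 1|} = (fun x => |x - 1|) ⁻¹' Set.Ici ε := rfl
      rw [this]
      exact IsClosed.preimage (by fun_prop) isClosed_Ici
    have hKcomp : IsCompact K := isCompact_Icc.inter_right hKcl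
    rcases K.eq_empty_or_nonempty with hKe | hKne
    · refine ⟨1, one_pos, fun x hx hx1 => absurd ?_ (Set.notMem_empty x)⟩
      rw [← hKe]
      exact ⟨hx, hx1⟩
    · have hKsub : K ⊆ O := fun x hx => hIccO (hsub hx.1)
      have hcb : ContinuousOn vbond K := (hvb_smooth.continuousOn).mono hKsub
      obtain ⟨x₀, hx₀K, hx₀min⟩ := hKcomp.exists_isMinOn hKne hcb
      have hx₀0 : (0:ℝ) ≤ x₀ := le_of_lt (lt_of_lt_of_le hl'0 hx₀K.1.1)
      have hx₀ne : x₀ ≠ 1 := by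
        intro h
        have h2 := hx₀K.2
        simp only [Set.mem_setOf_eq, h] at h2
        simp at h2
        linarith
      have hx₀gt : -1 < vbond x₀ := by
        rcases lt_or_eq_of_le (hvb_lb x₀ hx₀0) with h | h
        · exact h
        · exact absurd ((hvb_min x₀ hx₀0).mp h.symm) hx₀ne
      refine ⟨vbond x₀ + 1, by linarith, fun x hx hx1 => ?_⟩
      have := isMinOn_iff.mp hx₀min x ⟨hx, hx1⟩
      linarith
  obtain ⟨δ, hδ, hgapδ⟩ := hgap
  -- choice of η₀
  refine ⟨min 1 (15 * δ / (M + 1)), lt_min one_pos (by positivity), ?_⟩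
  intro η hη hηle m hmQ hmin
  obtain ⟨a, b⟩ := m
  have haI : a ∈ Set.Icc l' u' := hmQ.1
  have hbI : b ∈ Set.Icc l' u' := hmQ.2
  have ha0 : 0 < a := lt_of_lt_of_le hl'0 haI.1
  have hb0 : 0 < b := lt_of_lt_of_le hl'0 hbI.1
  have haLU : a ∈ Set.Icc L U := hsub haI
  have hbLU : b ∈ Set.Icc L U := hsub hbI
  have haO : a ∈ O := hIccO haLU
  have hbO : b ∈ O := hIccO hbLU
  have hvb1 : vbond 1 = -1 := (hvb_min 1 (by norm_num)).mpr rfl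
  -- closeness of (a,b) to (1,1)
  have hηM : η * (M + 1) ≤ 15 * δ := by
    have h1 : η ≤ 15 * δ / (M + 1) := le_trans hηle (min_le_right _ _)
    have h2 : (0:ℝ) < M + 1 := by linarith
    calc η * (M + 1) ≤ 15 * δ / (M + 1) * (M + 1) :=
          mul_le_mul_of_nonneg_right h1 (le_of_lt h2)
      _ = 15 * δ := by field_simp
  have hE11 := isMinOn_iff.mp hmin (1, 1) h11Q
  have hEab : Ered vbond vnbd η (a, b) =
      30 * vbond a + 60 * vbond b + η * Nfun vnbd (a, b) := rfl
  have hE11eq : Ered vbond vnbd η (1, 1) =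
      30 * vbond 1 + 60 * vbond 1 + η * Nfun vnbd (1, 1) := rfl
  rw [hEab, hE11eq, hvb1] at hE11
  have hNab : -M ≤ Nfun vnbd (a, b) := by
    have h := hM _ hmQ
    rw [Real.norm_eq_abs] at h
    linarith [(abs_le.mp h).1]
  have hN11 : Nfun vnbd (1, 1) ≤ M := by
    have h := hM _ h11Q
    rw [Real.norm_eq_abs] at h
    linarith [(abs_le.mp h).2]
  have hb1 : η * Nfun vnbd (1, 1) ≤ η * M := mul_le_mul_of_nonneg_left hN11 (le_of_lt hη)
  have hb2 : η * (-M) ≤ η * Nfun vnbd (a, b) := mul_le_mul_of_nonneg_left hNab (le_of_lt hη)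
  have hb2' : -(η * M) ≤ η * Nfun vnbd (a, b) := by
    have : η * (-M) = -(η * M) := by ring
    linarith [hb2]
  have hclose : 30 * (vbond a + 1) + 60 * (vbond b + 1) ≤ 2 * (η * M) := by linarith
  have hηM' : η * M < 15 * δ := by nlinarith
  have hva_nn : 0 ≤ vbond a + 1 := by linarith [hvb_lb a (le_of_lt ha0)]
  have hvb_nn : 0 ≤ vbond b + 1 := by linarith [hvb_lb b (le_of_lt hb0)]
  have hva1 : vbond a + 1 < δ := by linarith
  have hvb1' : vbond b + 1 < δ := by linarith
  -- interiority
  have hmin_le1 : ε ≤ (1 - l') / 2 := by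
    have := min_le_left (1 - l') (u' - 1); rw [hε_def]; linarith
  have hmin_le2 : ε ≤ (u' - 1) / 2 := by
    have := min_le_right (1 - l') (u' - 1); rw [hε_def]; linarith
  have haIoo : a ∈ Set.Ioo l' u' := by
    have h1 : |a - 1| < ε := by
      by_contra h
      push_neg at h
      have := hgapδ a haI h
      linarith
    have h2 := abs_lt.mp h1
    exact ⟨by linarith [h2.1], by linarith [h2.2]⟩
  have hbIoo : b ∈ Set.Ioo l' u' := by
    have h1 : |b - 1| < ε := by
      by_contra h
      push_neg at h
      have := hgapδ b hbI h
      linarith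
    have h2 := abs_lt.mp h1
    exact ⟨by linarith [h2.1], by linarith [h2.2]⟩
  -- local minimality in each coordinate
  have hlmin_a : IsLocalMin (fun x => Ered vbond vnbd η (x, b)) a := by
    filter_upwards [isOpen_Ioo.mem_nhds haIoo] with x hx
    exact isMinOn_iff.mp hmin (x, b) ⟨Set.Ioo_subset_Icc_self hx, hbI⟩
  have hlmin_b : IsLocalMin (fun y => Ered vbond vnbd η (a, y)) b := by
    filter_upwards [isOpen_Ioo.mem_nhds hbIoo] with y hy
    exact isMinOn_iff.mp hmin (a, y) ⟨haI, Set.Ioo_subset_Icc_self hy⟩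
  -- differentiability facts
  have hdva : DifferentiableAt ℝ vbond a :=
    (hvb_smooth.contDiffAt (hO.mem_nhds haO)).differentiableAt (by simp)
  have hdvb : DifferentiableAt ℝ vbond b :=
    (hvb_smooth.contDiffAt (hO.mem_nhds hbO)).differentiableAt (by simp)
  have hmem_ab := hmem a haI b hbI
  have hdiff_s : DifferentiableAt ℝ vnbd (Real.sqrt (a ^ 2 + b ^ 2 + a * b)) :=
    (hvn_smooth.contDiffAt (isOpen_Ioo.mem_nhds hmem_ab.2)).differentiableAt (by simp)
  have hdiff_sig : DifferentiableAt ℝ vnbd (2 * b * Real.sin (3 * Real.pi / 10)) :=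
    (hvn_smooth.contDiffAt (isOpen_Ioo.mem_nhds hmem_ab.1)).differentiableAt (by simp)
  -- the key identity
  have hkey : deriv vbond b - deriv vbond a = η * gfun vnbd (a, b) :=
    key_eq vbond vnbd η a b ha0 hb0 hdva hdvb hdiff_s hdiff_sig hlmin_a hlmin_b
  -- (a,b) is in the ball where |gfun - D| < |D|
  have hgab : |gfun vnbd (a, b) - D| < |D| := by
    have hmemball : ((a, b) : ℝ × ℝ) ∈ Metric.ball ((1:ℝ), (1:ℝ)) ε₀ := by
      rw [Metric.mem_ball, Prod.dist_eq]
      have h1 : dist a 1 ≤ ε₀ / 2 := by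
        rw [Real.dist_eq]
        exact abs_le.mpr ⟨by linarith [haI.1], by linarith [haI.2]⟩
      have h2 : dist b 1 ≤ ε₀ / 2 := by
        rw [Real.dist_eq]
        exact abs_le.mpr ⟨by linarith [hbI.1], by linarith [hbI.2]⟩
      exact lt_of_le_of_lt (max_le h1 h2) (by linarith)
    exact hball hmemball
  show Real.sign (b - a) = Real.sign D
  rcases hD0.lt_or_gt with hD | hD
  · -- D < 0 : gfun < 0, so deriv vbond b < deriv vbond a, so b < a
    have hg_neg : gfun vnbd (a, b) < 0 := by
      have h := (abs_lt.mp hgab).2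
      rw [abs_of_neg hD] at h
      linarith
    have hlt : deriv vbond b - deriv vbond a < 0 := by
      rw [hkey]
      exact mul_neg_of_pos_of_neg hη hg_neg
    have hba : b < a := by
      by_contra h
      push_neg at h
      rcases eq_or_lt_of_le h with h' | h'
      · rw [h'] at hlt; linarith
      · have := hsm haLU hbLU h'
        linarith
    rw [Real.sign_of_neg (by linarith : b - a < 0), Real.sign_of_neg hD]
  · -- D > 0 : gfun > 0, so deriv vbond b > deriv vbond a, so b > a
    have hg_pos : 0 < gfun vnbd (a, b) := by
      have h := (abs_lt.mp hgab).1
      rw [abs_of_pos hD] at h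
      linarith
    have hlt : 0 < deriv vbond b - deriv vbond a := by
      rw [hkey]
      exact mul_pos hη hg_pos
    have hba : a < b := by
      by_contra h
      push_neg at h
      rcases eq_or_lt_of_le h with h' | h'
      · rw [h'] at hlt; linarith
      · have := hsm hbLU haLU h'
        linarith
    rw [Real.sign_of_pos (by linarith : 0 < b - a), Real.sign_of_pos hD]
end

section
/- Assume in addition that v_nbd is strictly convex and increasing on I_nbd (so that t ↦ t·v_nbd'(t) is strictly increasing on I_nbd). Then, provided the open interval I_bond around 1 is chosen sufficiently small (depending on v_nbd) and η > 0 is sufficiently small, the unique minimizer (a*_η, b*_η) of E_η over cl(I_bond) × cl(I_bond) satisfies a*_η < b*_η. -/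
set_option maxHeartbeats 2000000 in
/-- if `v_nbd` is in addition strictly convex and increasing on `I_nbd`,
then for any sufficiently small open interval `I_bond = Ioo l u ∋ 1` and any sufficiently
small `η > 0` the unique minimizer `(a*_η, b*_η)` of `E_η` over `cl(I_bond)²`
satisfies `a*_η < b*_η`. -/
theorem stmt6
    (vbond vnbd : ℝ → ℝ) (L U n1 n2 : ℝ)
    (hL0 : 0 < L) (hL1 : L < 1) (hU1 : 1 < U)
    (O : Set ℝ) (hO : IsOpen O) (hIccO : Set.Icc L U ⊆ O)
    (hvb_smooth : ContDiffOn ℝ (⊤ : ℕ∞) vbond O)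
    (hvb_lb : ∀ x : ℝ, 0 ≤ x → -1 ≤ vbond x)
    (hvb_min : ∀ x : ℝ, 0 ≤ x → (vbond x = -1 ↔ x = 1))
    (hvb_conv : ∀ x ∈ Set.Icc L U, 0 < deriv (deriv vbond) x)
    (hn1 : n1 < 2 * Real.sin (3 * Real.pi / 10))
    (hn2 : Real.sqrt 3 < n2)
    (hvn_smooth : ContDiffOn ℝ (⊤ : ℕ∞) vnbd (Set.Ioo n1 n2))
    -- `v_nbd` is strictly convex and increasing on `I_nbd`
    (hvn_sconv : StrictConvexOn ℝ (Set.Ioo n1 n2) vnbd)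
    (hvn_mono : MonotoneOn vnbd (Set.Ioo n1 n2)) :
    ∃ r > (0:ℝ), ∀ l' u' : ℝ, 1 - r ≤ l' → l' < 1 → 1 < u' → u' ≤ 1 + r →
      Set.Icc l' u' ⊆ Set.Icc L U →
      (∀ a ∈ Set.Icc l' u', ∀ b ∈ Set.Icc l' u',
        2 * b * Real.sin (3 * Real.pi / 10) ∈ Set.Ioo n1 n2 ∧
        Real.sqrt (a ^ 2 + b ^ 2 + a * b) ∈ Set.Ioo n1 n2) →
      ∃ η₀ > (0:ℝ), ∀ η : ℝ, 0 < η → η ≤ η₀ →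
        ∀ m ∈ Set.Icc l' u' ×ˢ Set.Icc l' u',
          IsMinOn (Ered vbond vnbd η) (Set.Icc l' u' ×ˢ Set.Icc l' u') m →
          m.1 < m.2 := by
  set θ := Real.sin (3 * Real.pi / 10) with hθdef
  have pi_pos := Real.pi_pos
  have hθpos : 0 < θ := Real.sin_pos_of_pos_of_lt_pi (by positivity) (by nlinarith)
  have hσ3 : 2 * θ < Real.sqrt 3 := by
    have h : Real.sin (3 * Real.pi / 10) < Real.sin (Real.pi / 3) :=
      Real.strictMonoOn_sin ⟨by nlinarith, by nlinarith⟩ ⟨by nlinarith, by nlinarith⟩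
        (by nlinarith)
    rw [Real.sin_pi_div_three] at h
    rw [hθdef]
    nlinarith [Real.sq_sqrt (by norm_num : (0:ℝ) ≤ 3), Real.sqrt_nonneg 3]
  have hs3pos : (0:ℝ) < Real.sqrt 3 := Real.sqrt_pos.mpr (by norm_num)
  have hσmem : 2 * θ ∈ Set.Ioo n1 n2 := ⟨hn1, hσ3.trans hn2⟩
  have hs3mem : Real.sqrt 3 ∈ Set.Ioo n1 n2 := ⟨hn1.trans hσ3, hn2⟩
  have hopen : IsOpen (Set.Ioo n1 n2) := isOpen_Ioo
  have hvn_diff : ∀ x ∈ Set.Ioo n1 n2, DifferentiableAt ℝ vnbd x := fun x hx =>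
    ((hvn_smooth.differentiableOn (by simp)).differentiableAt (hopen.mem_nhds hx))
  have hder_mono : StrictMonoOn (deriv vnbd) (Set.Ioo n1 n2) :=
    hvn_sconv.strictMonoOn_deriv hvn_diff
  have hx0mem : (n1 + 2*θ)/2 ∈ Set.Ioo n1 n2 :=
    ⟨by linarith [hσmem.1], by linarith [hσmem.1, hσmem.2]⟩
  have hx0lt : (n1 + 2*θ)/2 < 2*θ := by linarith [hσmem.1]
  have hderσ_nonneg : 0 ≤ deriv vnbd (2*θ) := by
    have hslope := hvn_sconv.convexOn.slope_le_deriv hx0mem hσmem hx0lt (hvn_diff _ hσmem)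
    rw [slope_def_field] at hslope
    have hmono := hvn_mono hx0mem hσmem hx0lt.le
    have : 0 ≤ (vnbd (2*θ) - vnbd ((n1 + 2*θ)/2)) / (2*θ - (n1 + 2*θ)/2) :=
      div_nonneg (by linarith) (by linarith)
    linarith
  have hkey : 2*θ * deriv vnbd (2*θ) < Real.sqrt 3 * deriv vnbd (Real.sqrt 3) := by
    have h1 := hder_mono hσmem hs3mem hσ3
    nlinarith
  have hdercont : ContinuousOn (deriv vnbd) (Set.Ioo n1 n2) :=
    hvn_smooth.continuousOn_deriv_of_isOpen hopen (by simp)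
  set F : ℝ × ℝ → ℝ := fun p =>
    2 * θ * deriv vnbd (2 * p.2 * θ)
      - 3 * p.1 * deriv vnbd (Real.sqrt (p.1^2 + p.2^2 + p.1*p.2))
        / Real.sqrt (p.1^2 + p.2^2 + p.1*p.2) with hFdef
  have hF11 : F (1,1) < 0 := by
    have h1 : (2:ℝ) * 1 * θ = 2 * θ := by ring
    have h3 : ((1:ℝ)^2 + 1^2 + 1*1) = 3 := by norm_num
    have hsq : Real.sqrt 3 * Real.sqrt 3 = 3 := Real.mul_self_sqrt (by norm_num)
    simp only [hFdef, h1, h3]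
    have heq : 3 * (1:ℝ) * deriv vnbd (Real.sqrt 3) / Real.sqrt 3
        = Real.sqrt 3 * deriv vnbd (Real.sqrt 3) := by
      rw [div_eq_iff (ne_of_gt hs3pos)]
      linear_combination (-(deriv vnbd (Real.sqrt 3))) * hsq
    rw [heq]
    linarith
  have hFcont : ContinuousAt F (1,1) := by
    have hc1 : ContinuousAt (fun p : ℝ × ℝ => deriv vnbd (2 * p.2 * θ)) (1,1) := by
      have hinner : ContinuousAt (fun p : ℝ × ℝ => 2 * p.2 * θ) (1,1) := by fun_prop
      have houter : ContinuousAt (deriv vnbd) ((fun p : ℝ × ℝ => 2 * p.2 * θ) (1,1)) := by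
        have : ((fun p : ℝ × ℝ => 2 * p.2 * θ) (1,1)) = 2*θ := by norm_num
        rw [this]
        exact (hdercont.continuousAt (hopen.mem_nhds hσmem))
      exact ContinuousAt.comp (g := deriv vnbd) houter hinner
    have hs_cont : ContinuousAt (fun p : ℝ × ℝ => Real.sqrt (p.1^2 + p.2^2 + p.1*p.2)) (1,1) :=
      Real.continuous_sqrt.continuousAt.comp (by fun_prop)
    have hc2 : ContinuousAt
        (fun p : ℝ × ℝ => deriv vnbd (Real.sqrt (p.1^2 + p.2^2 + p.1*p.2))) (1,1) := by
      have houter : ContinuousAt (deriv vnbd)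
          ((fun p : ℝ × ℝ => Real.sqrt (p.1^2 + p.2^2 + p.1*p.2)) (1,1)) := by
        have : ((fun p : ℝ × ℝ => Real.sqrt (p.1^2 + p.2^2 + p.1*p.2)) (1,1))
            = Real.sqrt 3 := by norm_num
        rw [this]
        exact (hdercont.continuousAt (hopen.mem_nhds hs3mem))
      exact ContinuousAt.comp (g := deriv vnbd) houter hs_cont
    have hsne : ((fun p : ℝ × ℝ => Real.sqrt (p.1^2 + p.2^2 + p.1*p.2)) (1,1)) ≠ 0 := by
      have : ((fun p : ℝ × ℝ => Real.sqrt (p.1^2 + p.2^2 + p.1*p.2)) (1,1)) = Real.sqrt 3 := by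
        norm_num
      rw [this]; exact ne_of_gt hs3pos
    exact (continuousAt_const.mul hc1).sub
      (((continuousAt_const.mul continuousAt_fst).mul hc2).div hs_cont hsne)
  have hnhds : F ⁻¹' (Set.Iio 0) ∈ nhds ((1:ℝ),(1:ℝ)) := hFcont (Iio_mem_nhds hF11)
  obtain ⟨ε, hε, hball⟩ := Metric.mem_nhds_iff.mp hnhds
  have hF : ∀ p : ℝ × ℝ, dist p (1,1) < ε → F p < 0 :=
    fun p hp => hball (Metric.mem_ball.mpr hp)
  refine ⟨min (ε/2) (1/2), by positivity, ?_⟩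
  intro l' u' hl'r hl'1 h1u' hu'r hsub hmem
  have hrε : min (ε/2) (1/2) ≤ ε/2 := min_le_left _ _
  have hr2 : min (ε/2) (1/2) ≤ 1/2 := min_le_right _ _
  have hl'pos : 0 < l' := by linarith
  have hl'0 : (0:ℝ) ≤ l' := hl'pos.le
  have h1mem : (1:ℝ) ∈ Set.Icc l' u' := ⟨hl'1.le, h1u'.le⟩
  have hFneg : ∀ a ∈ Set.Icc l' u', ∀ b ∈ Set.Icc l' u',
      2 * θ * deriv vnbd (2 * b * θ)
        - 3 * a * deriv vnbd (Real.sqrt (a^2 + b^2 + a*b))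
          / Real.sqrt (a^2 + b^2 + a*b) < 0 := by
    intro a ha b hb
    have hdist : dist ((a,b) : ℝ × ℝ) ((1:ℝ),(1:ℝ)) < ε := by
      rw [Prod.dist_eq]
      have h1 : dist a 1 < ε := by
        rw [Real.dist_eq, abs_lt]
        constructor <;> linarith [ha.1, ha.2]
      have h2 : dist b 1 < ε := by
        rw [Real.dist_eq, abs_lt]
        constructor <;> linarith [hb.1, hb.2]
      exact max_lt h1 h2
    have := hF (a,b) hdist
    simpa [hFdef] using this
  -- positivity of the boundary gap
  have hvbl' : -1 < vbond l' := by
    rcases lt_or_eq_of_le (hvb_lb l' hl'0) with h | h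
    · exact h
    · exact absurd ((hvb_min l' hl'0).mp h.symm) (ne_of_lt hl'1)
  have hvbu' : -1 < vbond u' := by
    have hu'0 : (0:ℝ) ≤ u' := by linarith
    rcases lt_or_eq_of_le (hvb_lb u' hu'0) with h | h
    · exact h
    · exact absurd ((hvb_min u' hu'0).mp h.symm) (ne_of_gt h1u')
  set γ := min (vbond l' + 1) (vbond u' + 1) with hγdef
  have hγpos : 0 < γ := lt_min (by linarith) (by linarith)
  -- bound on the neighbour part of the energy
  have hvc : ContinuousOn vnbd (Set.Ioo n1 n2) := hvn_smooth.continuousOn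
  have hN1c : ContinuousOn (fun p : ℝ × ℝ => vnbd (2 * p.2 * θ))
      (Set.Icc l' u' ×ˢ Set.Icc l' u') := by
    exact ContinuousOn.comp (g := vnbd) (f := fun p : ℝ × ℝ => 2 * p.2 * θ) hvc
      (Continuous.continuousOn (by fun_prop))
      (fun p hp => (hmem p.1 hp.1 p.2 hp.2).1)
  have hN2c : ContinuousOn (fun p : ℝ × ℝ => vnbd (Real.sqrt (p.1^2 + p.2^2 + p.1*p.2)))
      (Set.Icc l' u' ×ˢ Set.Icc l' u') := by
    exact ContinuousOn.comp (g := vnbd)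
      (f := fun p : ℝ × ℝ => Real.sqrt (p.1^2 + p.2^2 + p.1*p.2)) hvc
      (Continuous.continuousOn (by fun_prop))
      (fun p hp => (hmem p.1 hp.1 p.2 hp.2).2)
  have hKcomp : IsCompact (Set.Icc l' u' ×ˢ Set.Icc l' u') :=
    (isCompact_Icc).prod isCompact_Icc
  have hNcont : ContinuousOn (fun p : ℝ × ℝ => 60 * vnbd (2 * p.2 * θ) +
      120 * vnbd (Real.sqrt (p.1^2 + p.2^2 + p.1*p.2))) (Set.Icc l' u' ×ˢ Set.Icc l' u') :=
    (continuousOn_const.mul hN1c).add (continuousOn_const.mul hN2c)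
  obtain ⟨M, hM⟩ := hKcomp.exists_bound_of_continuousOn hNcont
  have hM11 := hM (1,1) (Set.mk_mem_prod h1mem h1mem)
  have hM0 : 0 ≤ M := le_trans (norm_nonneg _) hM11
  refine ⟨15*γ/(M+1), by positivity, ?_⟩
  intro η hη hηM m hmK hmin
  obtain ⟨a, b⟩ := m
  obtain ⟨ha, hb⟩ := hmK
  simp only at ha hb ⊢
  have hapos : 0 < a := lt_of_lt_of_le hl'pos ha.1
  have hbpos : 0 < b := lt_of_lt_of_le hl'pos hb.1
  have hqpos : 0 < a^2 + b^2 + a*b := by nlinarith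
  have hspos : 0 < Real.sqrt (a^2 + b^2 + a*b) := Real.sqrt_pos.mpr hqpos
  have hsne : Real.sqrt (a^2 + b^2 + a*b) ≠ 0 := ne_of_gt hspos
  obtain ⟨hσbmem, hsmem⟩ := hmem a ha b hb
  -- energies
  have hvb1 : vbond 1 = -1 := (hvb_min 1 zero_le_one).mpr rfl
  have hNa := hM (a,b) (Set.mk_mem_prod ha hb)
  rw [Real.norm_eq_abs, abs_le] at hNa hM11
  simp only at hNa hM11
  have hE11 : Ered vbond vnbd η (a,b) ≤ Ered vbond vnbd η (1,1) :=
    isMinOn_iff.mp hmin (1,1) (Set.mk_mem_prod h1mem h1mem)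
  have hEab : Ered vbond vnbd η (a,b) = 30 * vbond a + 60 * vbond b +
      η * (60 * vnbd (2 * b * θ) + 120 * vnbd (Real.sqrt (a^2 + b^2 + a*b))) := rfl
  have hE1 : Ered vbond vnbd η (1,1) = 30 * vbond 1 + 60 * vbond 1 +
      η * (60 * vnbd (2 * 1 * θ) + 120 * vnbd (Real.sqrt (1^2 + 1^2 + 1*1))) := rfl
  have hmain : 30*(vbond a + 1) + 60*(vbond b + 1) ≤ 2*η*M := by
    rw [hEab, hE1, hvb1] at hE11
    have h1 : η * (60 * vnbd (2 * 1 * θ) + 120 * vnbd (Real.sqrt (1^2 + 1^2 + 1*1))) ≤ η * M :=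
      mul_le_mul_of_nonneg_left hM11.2 hη.le
    have h2 : η * (-M) ≤ η * (60 * vnbd (2 * b * θ) +
        120 * vnbd (Real.sqrt (a^2 + b^2 + a*b))) :=
      mul_le_mul_of_nonneg_left (by linarith [hNa.1]) hη.le
    linarith [h1, h2]
  have hsmall : 2*η*M < 30*γ := by
    have hM1 : (0:ℝ) < M + 1 := by linarith
    have h1 : 2*η*M ≤ 2*(15*γ/(M+1))*M := by
      have := mul_le_mul_of_nonneg_right hηM hM0
      linarith
    have h2 : 2*(15*γ/(M+1))*M < 30*γ := by
      have hfrac : M/(M+1) < 1 := (div_lt_one hM1).mpr (by linarith)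
      have heqq : 2*(15*γ/(M+1))*M = 30*γ*(M/(M+1)) := by ring
      rw [heqq]
      calc 30*γ*(M/(M+1)) < 30*γ*1 := mul_lt_mul_of_pos_left hfrac (by linarith)
        _ = 30*γ := by ring
    linarith
  have hvbb0 : 0 ≤ vbond b + 1 := by linarith [hvb_lb b hbpos.le]
  have hvba0 : 0 ≤ vbond a + 1 := by linarith [hvb_lb a hapos.le]
  have hne : a ≠ l' ∧ a ≠ u' ∧ b ≠ l' ∧ b ≠ u' := by
    refine ⟨?_, ?_, ?_, ?_⟩ <;> intro he
    · have : γ ≤ vbond a + 1 := by rw [he]; exact min_le_left _ _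
      linarith
    · have : γ ≤ vbond a + 1 := by rw [he]; exact min_le_right _ _
      linarith
    · have : γ ≤ vbond b + 1 := by rw [he]; exact min_le_left _ _
      linarith
    · have : γ ≤ vbond b + 1 := by rw [he]; exact min_le_right _ _
      linarith
  have haIoo : a ∈ Set.Ioo l' u' :=
    ⟨lt_of_le_of_ne ha.1 (Ne.symm hne.1), lt_of_le_of_ne ha.2 hne.2.1⟩
  have hbIoo : b ∈ Set.Ioo l' u' :=
    ⟨lt_of_le_of_ne hb.1 (Ne.symm hne.2.2.1), lt_of_le_of_ne hb.2 hne.2.2.2⟩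
  -- differentiability of vbond
  have hvb_diff : ∀ x ∈ Set.Icc L U, DifferentiableAt ℝ vbond x := fun x hx =>
    (hvb_smooth.differentiableOn (by simp)).differentiableAt (hO.mem_nhds (hIccO hx))
  have haLU : a ∈ Set.Icc L U := hsub ha
  have hbLU : b ∈ Set.Icc L U := hsub hb
  -- first partial derivative
  have hq1 : HasDerivAt (fun t : ℝ => t^2 + b^2 + t*b) (2*a + b) a := by
    have h1 : HasDerivAt (fun t : ℝ => t^2) (2*a) a := by simpa using hasDerivAt_pow 2 a
    have h2 : HasDerivAt (fun t : ℝ => t*b) b a := by simpa using (hasDerivAt_id a).mul_const b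
    simpa [Pi.add_def] using (h1.add_const (b^2)).add h2
  have hsq1 : HasDerivAt (fun t : ℝ => Real.sqrt (t^2 + b^2 + t*b))
      (1/(2*Real.sqrt (a^2 + b^2 + a*b)) * (2*a+b)) a := by
    have := (Real.hasDerivAt_sqrt (ne_of_gt hqpos)).comp a hq1
    simpa [Function.comp_def] using this
  have hchain1 : HasDerivAt (fun t : ℝ => vnbd (Real.sqrt (t^2 + b^2 + t*b)))
      (deriv vnbd (Real.sqrt (a^2 + b^2 + a*b)) *
        (1/(2*Real.sqrt (a^2 + b^2 + a*b)) * (2*a+b))) a := by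
    have := ((hvn_diff _ hsmem).hasDerivAt).comp a hsq1
    simpa [Function.comp_def] using this
  have hD1 : HasDerivAt (fun t : ℝ => Ered vbond vnbd η (t, b))
      (30 * deriv vbond a + η * (120 * (deriv vnbd (Real.sqrt (a^2 + b^2 + a*b)) *
        (1/(2*Real.sqrt (a^2 + b^2 + a*b)) * (2*a+b))))) a := by
    have hb1 : HasDerivAt (fun t : ℝ => 30 * vbond t) (30 * deriv vbond a) a :=
      ((hvb_diff a haLU).hasDerivAt).const_mul 30
    exact ((hb1.add_const (60 * vbond b)).add
      (((hchain1.const_mul 120).const_add (60 * vnbd (2 * b * θ))).const_mul η))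
  have hloc1 : IsLocalMin (fun t : ℝ => Ered vbond vnbd η (t, b)) a := by
    have hnb : Set.Ioo l' u' ∈ nhds a := Ioo_mem_nhds haIoo.1 haIoo.2
    have : ∀ᶠ t in nhds a, Ered vbond vnbd η (a, b) ≤ Ered vbond vnbd η (t, b) := by
      filter_upwards [hnb] with t ht
      exact isMinOn_iff.mp hmin (t, b) (Set.mk_mem_prod ⟨ht.1.le, ht.2.le⟩ hb)
    exact this
  have heq1 : 30 * deriv vbond a + η * (120 * (deriv vnbd (Real.sqrt (a^2 + b^2 + a*b)) *
      (1/(2*Real.sqrt (a^2 + b^2 + a*b)) * (2*a+b)))) = 0 := by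
    rw [← hD1.deriv]; exact hloc1.deriv_eq_zero
  -- second partial derivative
  have hq2 : HasDerivAt (fun t : ℝ => a^2 + t^2 + a*t) (2*b + a) b := by
    have h1 : HasDerivAt (fun t : ℝ => t^2) (2*b) b := by simpa using hasDerivAt_pow 2 b
    have h2 : HasDerivAt (fun t : ℝ => a*t) a b := by simpa using (hasDerivAt_id b).const_mul a
    simpa [Pi.add_def] using ((h1.const_add (a^2)).add h2)
  have hsq2 : HasDerivAt (fun t : ℝ => Real.sqrt (a^2 + t^2 + a*t))
      (1/(2*Real.sqrt (a^2 + b^2 + a*b)) * (2*b+a)) b := by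
    have := (Real.hasDerivAt_sqrt (ne_of_gt hqpos)).comp b hq2
    simpa [Function.comp_def] using this
  have hchain2 : HasDerivAt (fun t : ℝ => vnbd (Real.sqrt (a^2 + t^2 + a*t)))
      (deriv vnbd (Real.sqrt (a^2 + b^2 + a*b)) *
        (1/(2*Real.sqrt (a^2 + b^2 + a*b)) * (2*b+a))) b := by
    have := ((hvn_diff _ hsmem).hasDerivAt).comp b hsq2
    simpa [Function.comp_def] using this
  have hlin : HasDerivAt (fun t : ℝ => 2*t*θ) (2*θ) b := by
    simpa using ((hasDerivAt_id b).const_mul 2).mul_const θ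
  have hσb : HasDerivAt (fun t : ℝ => vnbd (2*t*θ)) (deriv vnbd (2*b*θ) * (2*θ)) b := by
    have := ((hvn_diff _ hσbmem).hasDerivAt).comp b hlin
    simpa [Function.comp_def] using this
  have hD2 : HasDerivAt (fun t : ℝ => Ered vbond vnbd η (a, t))
      (60 * deriv vbond b + η * (60 * (deriv vnbd (2*b*θ) * (2*θ)) +
        120 * (deriv vnbd (Real.sqrt (a^2 + b^2 + a*b)) *
          (1/(2*Real.sqrt (a^2 + b^2 + a*b)) * (2*b+a))))) b := by
    have hb1 : HasDerivAt (fun t : ℝ => 60 * vbond t) (60 * deriv vbond b) b :=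
      ((hvb_diff b hbLU).hasDerivAt).const_mul 60
    exact ((hb1.const_add (30 * vbond a)).add
      (((hσb.const_mul 60).add (hchain2.const_mul 120)).const_mul η))
  have hloc2 : IsLocalMin (fun t : ℝ => Ered vbond vnbd η (a, t)) b := by
    have hnb : Set.Ioo l' u' ∈ nhds b := Ioo_mem_nhds hbIoo.1 hbIoo.2
    have : ∀ᶠ t in nhds b, Ered vbond vnbd η (a, b) ≤ Ered vbond vnbd η (a, t) := by
      filter_upwards [hnb] with t ht
      exact isMinOn_iff.mp hmin (a, t) (Set.mk_mem_prod ha ⟨ht.1.le, ht.2.le⟩)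
    exact this
  have heq2 : 60 * deriv vbond b + η * (60 * (deriv vnbd (2*b*θ) * (2*θ)) +
      120 * (deriv vnbd (Real.sqrt (a^2 + b^2 + a*b)) *
        (1/(2*Real.sqrt (a^2 + b^2 + a*b)) * (2*b+a)))) = 0 := by
    rw [← hD2.deriv]; exact hloc2.deriv_eq_zero
  -- conclusion
  by_contra hab
  push_neg at hab
  have hmonovb : StrictMonoOn (deriv vbond) (Set.Icc L U) :=
    strictMonoOn_of_deriv_pos (convex_Icc L U)
      ((hvb_smooth.continuousOn_deriv_of_isOpen hO (by simp)).mono hIccO)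
      (fun x hx => hvb_conv x (interior_subset hx))
  have hd : deriv vbond b ≤ deriv vbond a := hmonovb.monotoneOn hbLU haLU hab
  have hFab := hFneg a ha b hb
  have hmul : η * (2 * (120 * (deriv vnbd (Real.sqrt (a^2 + b^2 + a*b)) *
      (1/(2*Real.sqrt (a^2 + b^2 + a*b)) * (2*a+b))))) ≤
      η * (60 * (deriv vnbd (2*b*θ) * (2*θ)) +
        120 * (deriv vnbd (Real.sqrt (a^2 + b^2 + a*b)) *
          (1/(2*Real.sqrt (a^2 + b^2 + a*b)) * (2*b+a)))) := by
    linarith [heq1, heq2, hd]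
  have hX := le_of_mul_le_mul_left hmul hη
  have h3 : 3*a*(deriv vnbd (Real.sqrt (a^2 + b^2 + a*b)) *
      (1/(2*Real.sqrt (a^2 + b^2 + a*b)))) ≤ θ * deriv vnbd (2*b*θ) := by
    linarith [hX]
  have h4 := mul_le_mul_of_nonneg_right h3
    (by positivity : (0:ℝ) ≤ 2*Real.sqrt (a^2 + b^2 + a*b))
  have h6 : 3*a*(deriv vnbd (Real.sqrt (a^2 + b^2 + a*b)) *
      (1/(2*Real.sqrt (a^2 + b^2 + a*b)))) * (2*Real.sqrt (a^2 + b^2 + a*b))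
      = 3*a*deriv vnbd (Real.sqrt (a^2 + b^2 + a*b)) := by
    field_simp
  have h7 : 3*a*deriv vnbd (Real.sqrt (a^2 + b^2 + a*b)) ≤
      θ * deriv vnbd (2*b*θ) * (2*Real.sqrt (a^2 + b^2 + a*b)) := by
    rw [← h6]; exact h4
  have hfin : 3*a*deriv vnbd (Real.sqrt (a^2 + b^2 + a*b)) / Real.sqrt (a^2 + b^2 + a*b)
      ≤ 2*θ*deriv vnbd (2*b*θ) := by
    rw [div_le_iff₀ hspos]
    linarith [h7]
  linarith [hFab, hfin]
end

section
/- Let v : I → ℝ be defined on an interval I containing [3π/5, 2π/3], suppose θ ↦ v(θ) − λθ² is convex on I for some λ > 0, and suppose v attains its minimum over I at 2π/3. Then for every θ ∈ I with θ ≤ 3π/5 one has v(θ) − v(3π/5) ≥ λ·(2π/3 − 3π/5)·(3π/5 − θ). -/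
/-! With `g θ = v θ - λ θ²` convex, the slope of `g` on `[θ, 3π/5]` is at most its slope on
`[3π/5, 2π/3]`, and the latter is at most `-λ (3π/5 + 2π/3)` because `v (2π/3) ≤ v (3π/5)`.
Unwinding the quadratic gives `v θ - v (3π/5) ≥ λ (2π/3 - θ)(3π/5 - θ)`, and
`2π/3 - θ ≥ 2π/3 - 3π/5`. -/

theorem ConvexOn.mul_sub_mul_sub_le_of_sub_sq {s : Set ℝ} {f : ℝ → ℝ} {lam a b x : ℝ}
    (hf : ConvexOn ℝ s fun t => f t - lam * t ^ 2) (hx : x ∈ s) (hb : b ∈ s)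
    (hxa : x < a) (hab : a < b) (hfab : f b ≤ f a) :
    lam * (b - x) * (a - x) ≤ f x - f a := by
  have hslope := hf.slope_mono_adjacent hx hb hxa hab
  rw [div_le_div_iff₀ (sub_pos.mpr hxa) (sub_pos.mpr hab)] at hslope
  have hslope_bound : (f a - f x - lam * (a ^ 2 - x ^ 2)) * (b - a) ≤
      -(lam * (a + b)) * (a - x) * (b - a) := by
    nlinarith [mul_le_mul_of_nonneg_right hfab (sub_pos.mpr hxa).le]
  nlinarith [le_of_mul_le_mul_right hslope_bound (sub_pos.mpr hab)]

theorem ConvexOn.mul_sub_mul_sub_le_of_sub_sq_of_le {s : Set ℝ} {f : ℝ → ℝ} {lam a b x : ℝ}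
    (hf : ConvexOn ℝ s fun t => f t - lam * t ^ 2) (hlam : 0 ≤ lam) (hx : x ∈ s) (hb : b ∈ s)
    (hxa : x ≤ a) (hab : a < b) (hfab : f b ≤ f a) :
    lam * (b - a) * (a - x) ≤ f x - f a := by
  rcases hxa.eq_or_lt with rfl | hxa
  · simp
  calc lam * (b - a) * (a - x) ≤ lam * (b - x) * (a - x) := by gcongr
    _ ≤ f x - f a := hf.mul_sub_mul_sub_le_of_sub_sq hx hb hxa hab hfab

/-- if `v` is `λ`-strongly convex on an interval `I ⊇ [3π/5, 2π/3]` and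
attains its minimum over `I` at `2π/3`, then for all `θ ∈ I` with `θ ≤ 3π/5` one has
`v(θ) − v(3π/5) ≥ λ·(2π/3 − 3π/5)·(3π/5 − θ)`. -/
theorem stmt11
    (I : Set ℝ) (v : ℝ → ℝ) (lam : ℝ)
    (hlam : 0 < lam)
    (hsub : Set.Icc (3 * Real.pi / 5) (2 * Real.pi / 3) ⊆ I)
    (hconv : ConvexOn ℝ I (fun θ => v θ - lam * θ ^ 2))
    (hmin : ∀ θ ∈ I, v (2 * Real.pi / 3) ≤ v θ) :
    ∀ θ ∈ I, θ ≤ 3 * Real.pi / 5 →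
      v θ - v (3 * Real.pi / 5) ≥
        lam * (2 * Real.pi / 3 - 3 * Real.pi / 5) * (3 * Real.pi / 5 - θ) := by
  intro θ hθ hθa
  have hab : 3 * Real.pi / 5 < 2 * Real.pi / 3 := by linarith [Real.pi_pos]
  have haI : 3 * Real.pi / 5 ∈ I := hsub ⟨le_rfl, hab.le⟩
  have hbI : 2 * Real.pi / 3 ∈ I := hsub ⟨hab.le, le_rfl⟩
  exact hconv.mul_sub_mul_sub_le_of_sub_sq_of_le hlam.le hθ hbI hθa hab (hmin _ haI)
end

section
/- Let n ≥ 3 and let x₁, …, x_n ∈ ℝ³ be the vertices of a closed polygon, i.e. x_i ≠ x_{i+1} for all i (indices modulo n). For each i let α_i ∈ [0, π] be the angle at x_i between the vectors x_{i−1} − x_i and x_{i+1} − x_i. Then α₁ + α₂ + … + α_n ≤ (n − 2)π. In particular, the five interior angles of any closed pentagon in ℝ³ sum to at most 3π, and the six interior angles of any closed hexagon in ℝ³ sum to at most 4π. -/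
/-!
Triangulate the polygon as a fan from one vertex `p`. Each triangle `p, yₖ, yₖ₊₁` has angle sum
`π`, even when `p` coincides with one of its other two vertices, because `yₖ ≠ yₖ₊₁`. By the
triangle inequality for angles, the angle of the polygon at `p`, and at each `yₖ`, is at most the
sum of the triangle angles there; summing over the `m` triangles of a polygon with `m + 2`
vertices gives `m π`.
-/

open Real Finset EuclideanGeometry

theorem ZMod.sum_eq_sum_range {M : Type*} [AddCommMonoid M] (n : ℕ) [NeZero n]
    (f : ZMod n → M) : ∑ i, f i = ∑ k ∈ range n, f k :=
  (sum_nbij' (fun k : ℕ => (k : ZMod n)) ZMod.val (by simp) (by simp [ZMod.val_lt])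
    (fun k hk => ZMod.val_cast_of_lt (mem_range.1 hk)) (fun i _ => ZMod.natCast_zmod_val i)
    fun _ _ => rfl).symm

namespace EuclideanGeometry

variable {V P : Type*} [NormedAddCommGroup V] [InnerProductSpace ℝ V] [MetricSpace P]
  [NormedAddTorsor V P]

theorem angle_sum_polygon_le (p : P) (y : ℕ → P) (m : ℕ) (hy : ∀ k ≤ m, y k ≠ y (k + 1)) :
    ∠ (y (m + 1)) p (y 0) + ∠ p (y 0) (y 1) + ∑ k ∈ range m, ∠ (y k) (y (k + 1)) (y (k + 2)) +
      ∠ (y m) (y (m + 1)) p ≤ (m + 1) * π := by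
  induction m with
  | zero =>
    have htriangle := angle_add_angle_add_angle_eq_pi p (hy 0 le_rfl).symm
    simp only [range_zero, sum_empty, CharP.cast_eq_zero, zero_add, one_mul]
    linarith
  | succ m ih =>
    have hfan := angle_le_angle_add_angle p (y (m + 2)) (y (m + 1)) (y 0)
    have hvertex := angle_le_angle_add_angle (y (m + 1)) (y m) p (y (m + 2))
    have htriangle := angle_add_angle_add_angle_eq_pi p (hy (m + 1) le_rfl).symm
    have hprev := ih fun k hk => hy k (by omega)
    rw [sum_range_succ]
    push_cast
    linarith

end EuclideanGeometry

/-- the interior angles of a closed polygon `x₁, …, x_n` in `ℝ³`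
(consecutive vertices distinct, indices modulo `n`, `n ≥ 3`) sum to at most `(n − 2)π`.
In particular, the five angles of a closed pentagon sum to at most `3π` and the six
angles of a closed hexagon sum to at most `4π`. -/
theorem stmt14
    (n : ℕ) [NeZero n] (hn : 3 ≤ n)
    (x : ZMod n → EuclideanSpace ℝ (Fin 3))
    (hconsec : ∀ i : ZMod n, x i ≠ x (i + 1)) :
    ∑ i : ZMod n, EuclideanGeometry.angle (x (i - 1)) (x i) (x (i + 1)) ≤
      ((n : ℝ) - 2) * Real.pi := by
  obtain ⟨m, rfl⟩ : ∃ m, n = m + 3 := ⟨n - 3, by omega⟩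
  set z : ℕ → EuclideanSpace ℝ (Fin 3) := fun k => x k
  have hwrap₀ : z (m + 3) = z 0 := by simp [z]
  have hwrap₁ : z (m + 4) = z 1 := by
    simp only [z]; rw [Nat.cast_add (m + 3) 1, ZMod.natCast_self, zero_add]
  have hbound := angle_sum_polygon_le (z 0) (fun k => z (k + 1)) m
    fun k _ => by simpa [z, add_assoc, one_add_one_eq_two] using hconsec (k + 1)
  calc ∑ i, ∠ (x (i - 1)) (x i) (x (i + 1))
      = ∑ k ∈ range (m + 3), ∠ (z k) (z (k + 1)) (z (k + 2)) := by
        rw [← Equiv.sum_comp (Equiv.addRight 1), ZMod.sum_eq_sum_range]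
        refine sum_congr rfl fun k _ => ?_
        simp only [z, Equiv.coe_addRight, add_sub_cancel_right, Nat.cast_add, Nat.cast_ofNat,
          Nat.cast_one, add_assoc, one_add_one_eq_two]
    _ ≤ ((m + 3 : ℕ) - 2) * π := by
        rw [sum_range_succ', sum_range_succ, sum_range_succ]
        simp only [add_assoc, Nat.reduceAdd, zero_add, hwrap₀, hwrap₁] at hbound ⊢
        push_cast
        linarith
end

section
/- For ε > 0 sufficiently small the following holds. Let, for i = 1, …, 60, tuples (a_i, b_i¹, b_i², θ_i, φ_i¹, φ_i²) ∈ I_bond³ × Θ_ε × Φ_ε × Φ_ε be given with mean angles θ̄ := (1/60)·Σ_i θ_i ≤ 3π/5 and φ̄ := (1/120)·Σ_i (φ_i¹ + φ_i²) ≤ 2π/3. Then Σ_{i=1}^{60} [ ½v_bond(a_i) + ½v_bond(b_i¹) + ½v_bond(b_i²) + v_angle(θ_i) + v_angle(φ_i¹) + v_angle(φ_i²) ] ≥ 60·(−3/2 + v_angle(3π/5)), with equality if and only if a_i = b_i¹ = b_i² = 1, θ_i = 3π/5, and φ_i¹ = φ_i² = 2π/3 for all i. -/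
set_option maxHeartbeats 1000000

open Finset in
lemma sum_eq_const_of_le {f : Fin 60 → ℝ} {c : ℝ} (h : ∀ i, c ≤ f i)
    (he : ∑ i, f i = 60 * c) : ∀ i, f i = c := by
  intro i
  by_contra hne
  have hlt : c < f i := lt_of_le_of_ne (h i) (Ne.symm hne)
  have := Finset.sum_lt_sum (f := fun _ : Fin 60 => c) (g := f)
    (fun j _ => h j) ⟨i, Finset.mem_univ i, hlt⟩
  simp [Finset.sum_const, Finset.card_univ] at this
  linarith

lemma var_id60 (θ : Fin 60 → ℝ) (m : ℝ) (hs : ∑ i, θ i = 60 * m) :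
    ∑ i, (θ i - m) ^ 2 = (∑ i, (θ i) ^ 2) - 60 * m ^ 2 := by
  have h : ∀ i : Fin 60, (θ i - m) ^ 2 = (θ i) ^ 2 - (2 * m * θ i - m ^ 2) := fun i => by ring
  simp_rw [h]
  rw [Finset.sum_sub_distrib, Finset.sum_sub_distrib, ← Finset.mul_sum, hs]
  simp [Finset.sum_const, Finset.card_univ]
  ring

lemma vangle_dec (vangle : ℝ → ℝ) (t1 t2 lam : ℝ)
    (ht1 : 0 ≤ t1) (ht2 : 2 * Real.pi / 3 < t2) (ht2' : t2 ≤ 2 * Real.pi)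
    (hva_nonneg : ∀ x ∈ Set.Icc 0 (2 * Real.pi), 0 ≤ vangle x)
    (hva_min : ∀ x ∈ Set.Icc 0 (2 * Real.pi),
      (vangle x = 0 ↔ x = 2 * Real.pi / 3 ∨ x = 4 * Real.pi / 3))
    (hlam : 0 < lam)
    (hva_conv : ConvexOn ℝ (Set.Icc t1 t2) (fun x => vangle x - lam * x ^ 2))
    (x y : ℝ) (hx : t1 ≤ x) (hxy : x < y) (hy : y < 2 * Real.pi / 3) :
    vangle y < vangle x := by
  have hpi : (0:ℝ) < Real.pi := Real.pi_pos
  set c : ℝ := 2 * Real.pi / 3 with hc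
  have hxc : x < c := hxy.trans hy
  set A : ℝ := (c - y) / (c - x) with hA
  set B : ℝ := (y - x) / (c - x) with hB
  have hcx : 0 < c - x := by linarith
  have hApos : 0 < A := div_pos (by linarith) hcx
  have hBpos : 0 < B := div_pos (by linarith) hcx
  have hcx' : c - x ≠ 0 := ne_of_gt hcx
  have hab : A + B = 1 := by rw [hA, hB]; field_simp; ring
  have hyeq : A * x + B * c = y := by rw [hA, hB]; field_simp; ring
  have hmemx : x ∈ Set.Icc t1 t2 := ⟨hx, by linarith⟩
  have hmemc : c ∈ Set.Icc t1 t2 := ⟨by linarith, ht2.le⟩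
  have H := hva_conv.2 hmemx hmemc hApos.le hBpos.le hab
  simp only [smul_eq_mul] at H
  rw [hyeq] at H
  have hvc : vangle c = 0 := (hva_min c ⟨by positivity, by rw [hc]; linarith⟩).mpr (Or.inl rfl)
  have hvx : 0 ≤ vangle x := hva_nonneg x ⟨by linarith, by linarith⟩
  rw [hvc] at H
  have hident : A * (vangle x - lam * x ^ 2) + B * (0 - lam * c ^ 2)
      = A * vangle x - lam * y ^ 2 - lam * (A * B * (x - c) ^ 2) := by
    have hb' : B = 1 - A := by linarith
    rw [← hyeq, hb']; ring
  rw [hident] at H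
  have hsq : 0 < (x - c) ^ 2 := by nlinarith
  have hterm : 0 < lam * (A * B * (x - c) ^ 2) := by positivity
  nlinarith [mul_nonneg hBpos.le hvx]

/-- for `ε > 0` sufficiently small, for any `60` tuples
`(a_i, b_i¹, b_i², θ_i, φ_i¹, φ_i²) ∈ I_bond³ × Θ_ε × Φ_ε × Φ_ε` whose mean angles
satisfy `θ̄ ≤ 3π/5` and `φ̄ ≤ 2π/3`, the total bond-plus-angle energy is at least
`60·(−3/2 + v_angle(3π/5))`, with equality iff every tuple equals
`(1, 1, 1, 3π/5, 2π/3, 2π/3)`. -/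
theorem stmt15
    (vbond vangle : ℝ → ℝ) (l u t1 t2 lam : ℝ)
    (hl0 : 0 < l) (hl1 : l < 1) (hu1 : 1 < u)
    -- `v_bond` is smooth on the closure of `I_bond` with `v_bond'' > 0` there
    (O : Set ℝ) (hO : IsOpen O) (hIccO : Set.Icc l u ⊆ O)
    (hvb_smooth : ContDiffOn ℝ (⊤ : ℕ∞) vbond O)
    (hvb_lb : ∀ x : ℝ, 0 ≤ x → -1 ≤ vbond x)
    (hvb_min : ∀ x : ℝ, 0 ≤ x → (vbond x = -1 ↔ x = 1))
    (hvb_conv : ∀ x ∈ Set.Icc l u, 0 < deriv (deriv vbond) x)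
    -- `I_angle = Icc t1 t2` is a small closed neighborhood of `[3π/5, 2π/3]` in `[0,2π]`
    (ht1 : 0 ≤ t1) (ht1' : t1 < 3 * Real.pi / 5)
    (ht2 : 2 * Real.pi / 3 < t2) (ht2' : t2 ≤ 2 * Real.pi)
    -- `v_angle ≥ 0` on `[0,2π]`, vanishing exactly at `2π/3` and `4π/3`
    (hva_nonneg : ∀ x ∈ Set.Icc 0 (2 * Real.pi), 0 ≤ vangle x)
    (hva_min : ∀ x ∈ Set.Icc 0 (2 * Real.pi),
      (vangle x = 0 ↔ x = 2 * Real.pi / 3 ∨ x = 4 * Real.pi / 3))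
    -- `v_angle` is `λ`-strongly convex on `I_angle`
    (hlam : 0 < lam)
    (hva_conv : ConvexOn ℝ (Set.Icc t1 t2) (fun x => vangle x - lam * x ^ 2)) :
    ∃ ε₀ > (0:ℝ), ∀ ε : ℝ, 0 < ε → ε ≤ ε₀ →
      -- `Θ_ε ∪ Φ_ε ⊆ I_angle`
      Set.Ioo (3 * Real.pi / 5 - ε) (3 * Real.pi / 5 + ε) ∪
        Set.Ioo (2 * Real.pi / 3 - ε) (2 * Real.pi / 3 + ε) ⊆ Set.Icc t1 t2 →
      ∀ a b1 b2 θ φ1 φ2 : Fin 60 → ℝ,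
      (∀ i : Fin 60, a i ∈ Set.Ioo l u ∧ b1 i ∈ Set.Ioo l u ∧ b2 i ∈ Set.Ioo l u ∧
        θ i ∈ Set.Ioo (3 * Real.pi / 5 - ε) (3 * Real.pi / 5 + ε) ∧
        φ1 i ∈ Set.Ioo (2 * Real.pi / 3 - ε) (2 * Real.pi / 3 + ε) ∧
        φ2 i ∈ Set.Ioo (2 * Real.pi / 3 - ε) (2 * Real.pi / 3 + ε)) →
      -- mean angle constraints
      (1 / 60 : ℝ) * ∑ i, θ i ≤ 3 * Real.pi / 5 →
      (1 / 120 : ℝ) * ∑ i, (φ1 i + φ2 i) ≤ 2 * Real.pi / 3 →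
        ((∑ i, ((1 / 2) * vbond (a i) + (1 / 2) * vbond (b1 i) + (1 / 2) * vbond (b2 i) +
            vangle (θ i) + vangle (φ1 i) + vangle (φ2 i))) ≥
          60 * (-3 / 2 + vangle (3 * Real.pi / 5)) ∧
        ((∑ i, ((1 / 2) * vbond (a i) + (1 / 2) * vbond (b1 i) + (1 / 2) * vbond (b2 i) +
            vangle (θ i) + vangle (φ1 i) + vangle (φ2 i))) =
            60 * (-3 / 2 + vangle (3 * Real.pi / 5)) ↔
          ∀ i : Fin 60, a i = 1 ∧ b1 i = 1 ∧ b2 i = 1 ∧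
            θ i = 3 * Real.pi / 5 ∧ φ1 i = 2 * Real.pi / 3 ∧ φ2 i = 2 * Real.pi / 3)) := by
  have hpi3 : (3:ℝ) < Real.pi := Real.pi_gt_three
  have hpi : (0:ℝ) < Real.pi := Real.pi_pos
  refine ⟨min (3 * Real.pi / 5 - t1) (Real.pi / 3), lt_min (by linarith) (by linarith), ?_⟩
  intro ε hε hεle hsub a b1 b2 θ φ1 φ2 hmem hθbarle hφbarle
  have hε1 : ε ≤ 3 * Real.pi / 5 - t1 := hεle.trans (min_le_left _ _)
  have hε2 : ε ≤ Real.pi / 3 := hεle.trans (min_le_right _ _)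
  -- memberships
  have hθIcc : ∀ i, θ i ∈ Set.Icc t1 t2 := fun i => hsub (Or.inl (hmem i).2.2.2.1)
  have hφ1Icc : ∀ i, φ1 i ∈ Set.Icc t1 t2 := fun i => hsub (Or.inr (hmem i).2.2.2.2.1)
  have hφ2Icc : ∀ i, φ2 i ∈ Set.Icc t1 t2 := fun i => hsub (Or.inr (hmem i).2.2.2.2.2)
  have hφ1nn : ∀ i, 0 ≤ vangle (φ1 i) := fun i =>
    hva_nonneg _ ⟨ht1.trans (hφ1Icc i).1, (hφ1Icc i).2.trans ht2'⟩
  have hφ2nn : ∀ i, 0 ≤ vangle (φ2 i) := fun i =>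
    hva_nonneg _ ⟨ht1.trans (hφ2Icc i).1, (hφ2Icc i).2.trans ht2'⟩
  have ha0 : ∀ i, (0:ℝ) ≤ a i := fun i => (hl0.trans (hmem i).1.1).le
  have hb10 : ∀ i, (0:ℝ) ≤ b1 i := fun i => (hl0.trans (hmem i).2.1.1).le
  have hb20 : ∀ i, (0:ℝ) ≤ b2 i := fun i => (hl0.trans (hmem i).2.2.1.1).le
  have hva0 : ∀ i, -(1/2 : ℝ) ≤ (1/2) * vbond (a i) := fun i => by
    have := hvb_lb (a i) (ha0 i); linarith
  have hvb10 : ∀ i, -(1/2 : ℝ) ≤ (1/2) * vbond (b1 i) := fun i => by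
    have := hvb_lb (b1 i) (hb10 i); linarith
  have hvb20 : ∀ i, -(1/2 : ℝ) ≤ (1/2) * vbond (b2 i) := fun i => by
    have := hvb_lb (b2 i) (hb20 i); linarith
  -- split the sum
  have hsplit : ∑ i, ((1 / 2) * vbond (a i) + (1 / 2) * vbond (b1 i) + (1 / 2) * vbond (b2 i) +
        vangle (θ i) + vangle (φ1 i) + vangle (φ2 i))
      = (∑ i, (1/2 : ℝ) * vbond (a i)) + (∑ i, (1/2 : ℝ) * vbond (b1 i)) +
        (∑ i, (1/2 : ℝ) * vbond (b2 i)) + (∑ i, vangle (θ i)) +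
        (∑ i, vangle (φ1 i)) + (∑ i, vangle (φ2 i)) := by
    simp [Finset.sum_add_distrib]
  -- mean of θ
  set m : ℝ := (1 / 60 : ℝ) * ∑ i, θ i with hm
  have hsumlb : 60 * (3 * Real.pi / 5 - ε) < ∑ i, θ i := by
    have h := Finset.sum_lt_sum_of_nonempty (s := (Finset.univ : Finset (Fin 60)))
      Finset.univ_nonempty (f := fun _ => 3 * Real.pi / 5 - ε) (g := θ)
      (fun i _ => (hmem i).2.2.2.1.1)
    simp only [Finset.sum_const, Finset.card_univ, Fintype.card_fin, nsmul_eq_mul] at h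
    push_cast at h
    linarith
  have hmgt : 3 * Real.pi / 5 - ε < m := by rw [hm]; linarith
  have hmt1 : t1 ≤ m := by linarith
  have hmle : m ≤ 3 * Real.pi / 5 := hθbarle
  have hmIcc : m ∈ Set.Icc t1 t2 := ⟨hmt1, by linarith⟩
  -- Jensen for g = vangle - lam x^2
  have hjensen := hva_conv.map_sum_le (t := Finset.univ) (w := fun _ : Fin 60 => (1/60 : ℝ))
    (p := θ) (fun i _ => by norm_num) (by simp) (fun i _ => hθIcc i)
  simp only [smul_eq_mul] at hjensen
  rw [← Finset.mul_sum] at hjensen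
  rw [← hm] at hjensen
  have hrhs : ∑ i, (1/60 : ℝ) * (vangle (θ i) - lam * (θ i) ^ 2)
      = (1/60 : ℝ) * ((∑ i, vangle (θ i)) - lam * ∑ i, (θ i) ^ 2) := by
    rw [← Finset.mul_sum, Finset.sum_sub_distrib, ← Finset.mul_sum]
  rw [hrhs] at hjensen
  have hvar := var_id60 θ m (by rw [hm]; ring)
  have hVnn : 0 ≤ ∑ i, (θ i - m) ^ 2 := Finset.sum_nonneg fun i _ => sq_nonneg _
  have hlamQ : lam * (∑ i, (θ i) ^ 2)
      = lam * (∑ i, (θ i - m) ^ 2) + 60 * (lam * m ^ 2) := by rw [hvar]; ring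
  have hθkey : 60 * vangle m + lam * (∑ i, (θ i - m) ^ 2) ≤ ∑ i, vangle (θ i) := by linarith
  have hvm : vangle (3 * Real.pi / 5) ≤ vangle m := by
    rcases eq_or_lt_of_le hmle with h | h
    · rw [h]
    · exact (vangle_dec vangle t1 t2 lam ht1 ht2 ht2' hva_nonneg hva_min hlam hva_conv
        m _ hmt1 h (by linarith)).le
  have hlamV : 0 ≤ lam * (∑ i, (θ i - m) ^ 2) := mul_nonneg hlam.le hVnn
  have hθge : 60 * vangle (3 * Real.pi / 5) + lam * (∑ i, (θ i - m) ^ 2)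
      ≤ ∑ i, vangle (θ i) := by linarith
  -- bond sums
  have hAsum : (60:ℝ) * (-(1/2)) ≤ ∑ i, (1/2 : ℝ) * vbond (a i) := by
    calc (60:ℝ) * (-(1/2)) = ∑ _i : Fin 60, (-(1/2) : ℝ) := by simp
    _ ≤ _ := Finset.sum_le_sum fun i _ => hva0 i
  have hB1sum : (60:ℝ) * (-(1/2)) ≤ ∑ i, (1/2 : ℝ) * vbond (b1 i) := by
    calc (60:ℝ) * (-(1/2)) = ∑ _i : Fin 60, (-(1/2) : ℝ) := by simp
    _ ≤ _ := Finset.sum_le_sum fun i _ => hvb10 i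
  have hB2sum : (60:ℝ) * (-(1/2)) ≤ ∑ i, (1/2 : ℝ) * vbond (b2 i) := by
    calc (60:ℝ) * (-(1/2)) = ∑ _i : Fin 60, (-(1/2) : ℝ) := by simp
    _ ≤ _ := Finset.sum_le_sum fun i _ => hvb20 i
  have hφ1sum : 0 ≤ ∑ i, vangle (φ1 i) := Finset.sum_nonneg fun i _ => hφ1nn i
  have hφ2sum : 0 ≤ ∑ i, vangle (φ2 i) := Finset.sum_nonneg fun i _ => hφ2nn i
  constructor
  · rw [ge_iff_le, hsplit]; linarith
  constructor
  · intro heq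
    rw [hsplit] at heq
    have hAeq : ∑ i, (1/2 : ℝ) * vbond (a i) = 60 * (-(1/2)) := by linarith
    have hB1eq : ∑ i, (1/2 : ℝ) * vbond (b1 i) = 60 * (-(1/2)) := by linarith
    have hB2eq : ∑ i, (1/2 : ℝ) * vbond (b2 i) = 60 * (-(1/2)) := by linarith
    have hTeq : ∑ i, vangle (θ i) = 60 * vangle (3 * Real.pi / 5) := by linarith
    have hP1eq : ∑ i, vangle (φ1 i) = 60 * (0:ℝ) := by linarith
    have hP2eq : ∑ i, vangle (φ2 i) = 60 * (0:ℝ) := by linarith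
    have hai : ∀ i, (1/2 : ℝ) * vbond (a i) = -(1/2) := sum_eq_const_of_le hva0 hAeq
    have hb1i : ∀ i, (1/2 : ℝ) * vbond (b1 i) = -(1/2) := sum_eq_const_of_le hvb10 hB1eq
    have hb2i : ∀ i, (1/2 : ℝ) * vbond (b2 i) = -(1/2) := sum_eq_const_of_le hvb20 hB2eq
    have hp1i : ∀ i, vangle (φ1 i) = 0 := sum_eq_const_of_le hφ1nn hP1eq
    have hp2i : ∀ i, vangle (φ2 i) = 0 := sum_eq_const_of_le hφ2nn hP2eq
    have hVle : ∑ i, (θ i - m) ^ 2 ≤ 0 := by nlinarith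
    have hV0 : ∑ i, (θ i - m) ^ 2 = 0 := le_antisymm hVle hVnn
    have hm35 : m = 3 * Real.pi / 5 := by
      rcases eq_or_lt_of_le hmle with h | h
      · exact h
      · exfalso
        have := vangle_dec vangle t1 t2 lam ht1 ht2 ht2' hva_nonneg hva_min hlam hva_conv
          m _ hmt1 h (by linarith)
        linarith
    have hθm : ∀ i, θ i = m := by
      intro i
      have h0 := (Finset.sum_eq_zero_iff_of_nonneg
        (fun j _ => sq_nonneg (θ j - m))).mp hV0 i (Finset.mem_univ i)
      have := sq_eq_zero_iff.mp h0
      linarith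
    intro i
    refine ⟨(hvb_min (a i) (ha0 i)).mp (by have := hai i; linarith),
      (hvb_min (b1 i) (hb10 i)).mp (by have := hb1i i; linarith),
      (hvb_min (b2 i) (hb20 i)).mp (by have := hb2i i; linarith),
      (hθm i).trans hm35, ?_, ?_⟩
    · rcases (hva_min (φ1 i) ⟨ht1.trans (hφ1Icc i).1, (hφ1Icc i).2.trans ht2'⟩).mp (hp1i i)
        with h | h
      · exact h
      · exfalso
        have h1 : φ1 i < 2 * Real.pi / 3 + ε := (hmem i).2.2.2.2.1.2
        linarith
    · rcases (hva_min (φ2 i) ⟨ht1.trans (hφ2Icc i).1, (hφ2Icc i).2.trans ht2'⟩).mp (hp2i i)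
        with h | h
      · exact h
      · exfalso
        have h1 : φ2 i < 2 * Real.pi / 3 + ε := (hmem i).2.2.2.2.2.2
        linarith
  · intro hall
    have hvb1 : vbond 1 = -1 := (hvb_min 1 (by norm_num)).mpr rfl
    have hva23 : vangle (2 * Real.pi / 3) = 0 :=
      (hva_min _ ⟨by positivity, by linarith⟩).mpr (Or.inl rfl)
    have hterm : ∀ i : Fin 60, (1 / 2) * vbond (a i) + (1 / 2) * vbond (b1 i) +
        (1 / 2) * vbond (b2 i) + vangle (θ i) + vangle (φ1 i) + vangle (φ2 i)
        = -3 / 2 + vangle (3 * Real.pi / 5) := fun i => by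
      rw [(hall i).1, (hall i).2.1, (hall i).2.2.1, (hall i).2.2.2.1,
        (hall i).2.2.2.2.1, (hall i).2.2.2.2.2, hvb1, hva23]
      ring
    rw [Finset.sum_congr rfl fun i _ => hterm i]
    simp [Finset.sum_const, Finset.card_univ]
    ring
end
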